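/- arXiv:1906.08737 — 15 statements merged into one kernel-verified Lean document; each statement's English description precedes it below -/
import Mathlib

section
/- Let (C, J) be a site and α : F ⟶ G a morphism of presheaves on C. Then the sheafification a_J(α) is a monomorphism in Sh(C, J) if and only if for every object c of C and all elements x, x' ∈ F(c) with α(c)(x) = α(c)(x'), the sieve {f : d ⟶ c | F(f)(x) = F(f)(x')} is J-covering. -/
open CategoryTheory Opposite

universe u

namespace Stmt0

variable {C : Type u} [SmallCategory C]

def eqSieve (F : Cᵒᵖ ⥤ Type u) {c : C} (x x' : F.obj (op c)) : Sieve c where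
  arrows _ f := F.map f.op x = F.map f.op x'
  downward_closed := by
    intro d e f hf g
    simp only [op_comp, Functor.map_comp, types_comp_apply, hf]

end Stmt0

/-! Sheafification preserves and reflects local injectivity. For a morphism of sheaves of types,
local injectivity is injectivity on sections, and so is being a monomorphism, because the
inclusion of sheaves into presheaves is a right adjoint. Hence `a_J(α)` is mono exactly when `α`
is locally injective, which is the covering condition on the sieves `eqSieve F x x'`. -/

universe v w

namespace CategoryTheory

variable {C : Type u} [Category.{v} C] {J : GrothendieckTopology C}

lemma Sheaf.isLocallyInjective_iff_mono [HasWeakSheafify J (Type w)] {F G : Sheaf J (Type w)}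
    (φ : F ⟶ G) : IsLocallyInjective φ ↔ Mono φ := by
  refine ⟨fun _ ↦ mono_of_isLocallyInjective φ, fun _ ↦ ?_⟩
  rw [isLocallyInjective_iff_injective]
  have : Mono φ.hom := (sheafToPresheaf J _).map_mono φ
  exact fun X ↦ (mono_iff_injective _).1 (NatTrans.mono_iff_mono_app φ.hom |>.1 this X)

lemma Presheaf.isLocallyInjective_iff_mono_presheafToSheaf_map (J : GrothendieckTopology C)
    [HasWeakSheafify J (Type w)] [J.WEqualsLocallyBijective (Type w)]
    {F G : Cᵒᵖ ⥤ Type w} (α : F ⟶ G) :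
    IsLocallyInjective J α ↔ Mono ((presheafToSheaf J (Type w)).map α) := by
  rw [← isLocallyInjective_presheafToSheaf_map_iff, Sheaf.isLocallyInjective_iff_mono]

end CategoryTheory

namespace Stmt0

variable {C : Type u} [SmallCategory C]

lemma isLocallyInjective_iff_eqSieve_mem (J : GrothendieckTopology C) {F G : Cᵒᵖ ⥤ Type u}
    (α : F ⟶ G) :
    Presheaf.IsLocallyInjective J α ↔
      ∀ (c : C) (x x' : F.obj (op c)), α.app (op c) x = α.app (op c) x' → eqSieve F x x' ∈ J c :=
  ⟨fun h c ↦ h.equalizerSieve_mem (X := op c), fun h ↦ ⟨fun {X} ↦ h X.unop⟩⟩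

/-- Lemma 2.1(i): the sheafification of a morphism of presheaves `α : F ⟶ G` is a monomorphism
in `Sh(C, J)` if and only if for every `c` and all `x, x' ∈ F(c)` with `α(c)(x) = α(c)(x')`,
the sieve `{f : d ⟶ c | F(f)(x) = F(f)(x')}` is `J`-covering. -/
theorem sheafification_mono_iff (J : GrothendieckTopology C) {F G : Cᵒᵖ ⥤ Type u} (α : F ⟶ G) :
    Mono ((presheafToSheaf J (Type u)).map α) ↔
      ∀ (c : C) (x x' : F.obj (op c)),
        α.app (op c) x = α.app (op c) x' → eqSieve F x x' ∈ J c :=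
  (Presheaf.isLocallyInjective_iff_mono_presheafToSheaf_map J α).symm.trans
    (isLocallyInjective_iff_eqSieve_mem J α)

end Stmt0
end

section
/- Let (C, J) be a site and F a presheaf on C. The lattice of subobjects of the sheafification a_J(F) in Sh(C, J) is isomorphic to the lattice of c_J-closed subobjects of F in the presheaf category, where the isomorphism sends a closed subpresheaf to its image under a_J, and a subobject of a_J(F) to its pullback along the unit F ⟶ a_J(F). -/
/-!
The unit `η : F ⟶ a_J(F)` is locally injective and locally surjective. Local injectivity makes
`A ↦ η⁻¹(closure (η A))` the identity on closed subpresheaves `A` of `F`; local surjectivity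
makes `B ↦ closure (η (η⁻¹ B))` the identity on closed subpresheaves `B` of `a_J(F)`, since every
section of `B` is locally the image of a section of `η⁻¹ B`. Finally, subobjects of a sheaf `G`
in `Sh(C, J)` are the subpresheaves of `G` that are sheaves, which are exactly the closed ones.
-/

open CategoryTheory CategoryTheory.GrothendieckTopology CategoryTheory.Limits Opposite

universe u

namespace Stmt2

variable {C : Type u} [SmallCategory C]

/-- The pullback of a subobject `S` of the sheafification `a_J(F)` along the unit
`F ⟶ a_J(F)`. -/
def unitPullback (J : GrothendieckTopology C) (F : Cᵒᵖ ⥤ Type u)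
    (S : Subobject ((presheafToSheaf J (Type u)).obj F)) : Subfunctor F where
  obj c := {x | ∃ s : ((S : Sheaf J (Type u)).val).obj c,
    (Subobject.arrow S).hom.app c s =
      ((sheafificationAdjunction J (Type u)).unit.app F).app c x}
  map := by
    rintro c c' i x ⟨s, hs⟩
    refine ⟨(S : Sheaf J (Type u)).val.map i s, ?_⟩
    rw [FunctorToTypes.naturality, hs, ← FunctorToTypes.naturality]; rfl

end Stmt2

universe v w

namespace CategoryTheory

variable {C : Type u} [Category.{v} C] {J : GrothendieckTopology C}

/-- `A.sheafify J` is the `c_J`-closure of `A`. -/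
abbrev ClosedSubfunctor (J : GrothendieckTopology C) (F : Cᵒᵖ ⥤ Type w) : Type _ :=
  {A : Subfunctor F // A.sheafify J = A}

namespace Subfunctor

variable {F G : Cᵒᵖ ⥤ Type w}

lemma sheafify_mono {A B : Subfunctor F} (h : A ≤ B) : A.sheafify J ≤ B.sheafify J :=
  fun _ _ hx => J.superset_covering (fun _ _ hf => h _ hf) hx

lemma sheafify_idem (A : Subfunctor F) : (A.sheafify J).sheafify J = A.sheafify J := by
  refine le_antisymm (fun U x hx => J.transitive hx _ fun V f hf => ?_) (le_sheafify J _)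
  have hpull : (A.sieveOfSection x).pullback f = A.sieveOfSection (F.map f.op x) := by
    ext W g
    simp
  exact hpull ▸ hf

lemma sheafify_preimage_le (B : Subfunctor G) (η : F ⟶ G) :
    (B.preimage η).sheafify J ≤ (B.sheafify J).preimage η := fun _ _ hx =>
  J.superset_covering (fun _ _ hf => by simpa [NatTrans.naturality_apply] using hf) hx

lemma preimage_sheafify_image_le (A : Subfunctor F) (η : F ⟶ G)
    [Presheaf.IsLocallyInjective J η] :
    ((A.image η).sheafify J).preimage η ≤ A.sheafify J := by
  intro U x hx
  choose a ha hax using fun V (f : V ⟶ U.unop)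
    (hf : (A.image η).sieveOfSection (η.app U x) f) => hf
  refine J.superset_covering ?_ (J.bind_covering hx fun V f hf =>
    Presheaf.equalizerSieve_mem J η (a V f hf) (F.map f.op x)
      ((hax V f hf).trans (NatTrans.naturality_apply η f.op x).symm))
  rintro W _ ⟨V, g, f, hf, hg, rfl⟩
  have hW : F.map g.op (a V f hf) ∈ A.obj (op W) := A.map g.op (ha V f hf)
  rw [show F.map g.op (a V f hf) = F.map g.op (F.map f.op x) from hg] at hW
  simpa using hW

lemma le_sheafify_image_preimage (B : Subfunctor G) (η : F ⟶ G)
    [Presheaf.IsLocallySurjective J η] :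
    B ≤ ((B.preimage η).image η).sheafify J := by
  intro U y hy
  refine J.superset_covering ?_ (Presheaf.imageSieve_mem J η y)
  rintro V f ⟨x, hx⟩
  exact ⟨x, by simpa [hx] using B.map f.op hy, hx⟩

lemma sheafify_preimage_eq_of_closed {B : Subfunctor G} (hB : B.sheafify J = B) (η : F ⟶ G) :
    (B.preimage η).sheafify J = B.preimage η :=
  le_antisymm ((B.sheafify_preimage_le η).trans_eq (by rw [hB])) (le_sheafify J _)

lemma preimage_sheafify_image_eq_of_closed {A : Subfunctor F} (hA : A.sheafify J = A)
    (η : F ⟶ G) [Presheaf.IsLocallyInjective J η] :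
    ((A.image η).sheafify J).preimage η = A :=
  le_antisymm ((A.preimage_sheafify_image_le η).trans_eq hA) fun _ x hx =>
    le_sheafify J (A.image η) _ ⟨x, hx, rfl⟩

lemma sheafify_image_preimage_eq_of_closed {B : Subfunctor G} (hB : B.sheafify J = B)
    (η : F ⟶ G) [Presheaf.IsLocallySurjective J η] :
    ((B.preimage η).image η).sheafify J = B :=
  le_antisymm ((sheafify_mono ((image_le_iff _ _ _).2 le_rfl)).trans_eq hB)
    (B.le_sheafify_image_preimage η)

end Subfunctor

namespace ClosedSubfunctor

variable {F G : Cᵒᵖ ⥤ Type w}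

def orderIsoOfIsLocallyBijective (η : F ⟶ G) [Presheaf.IsLocallyInjective J η]
    [Presheaf.IsLocallySurjective J η] : ClosedSubfunctor J F ≃o ClosedSubfunctor J G :=
  Equiv.toOrderIso
    { toFun A := ⟨(A.1.image η).sheafify J, Subfunctor.sheafify_idem _⟩
      invFun B := ⟨B.1.preimage η, Subfunctor.sheafify_preimage_eq_of_closed B.2 η⟩
      left_inv A := Subtype.ext (Subfunctor.preimage_sheafify_image_eq_of_closed A.2 η)
      right_inv B := Subtype.ext (Subfunctor.sheafify_image_preimage_eq_of_closed B.2 η) }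
    (fun _ _ h => Subfunctor.sheafify_mono fun _ _ ⟨x, hx, e⟩ => ⟨x, h _ hx, e⟩)
    (fun _ _ h _ _ hx => h _ hx)

end ClosedSubfunctor

instance {A B : Sheaf J (Type w)} (f : A ⟶ B) [Mono f] : Mono f.hom :=
  (sheafToPresheaf J _).map_mono f

namespace Subfunctor

variable {G : Sheaf J (Type w)} (B : Subfunctor G.obj) (hB : Presieve.IsSheaf J B.toFunctor)

abbrev toSheaf : Sheaf J (Type w) := ⟨B.toFunctor, (isSheaf_iff_isSheaf_of_type J _).2 hB⟩

abbrev sheafι : B.toSheaf hB ⟶ G := ObjectProperty.homMk B.ι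

instance : Mono (B.sheafι hB) :=
  have : Mono (B.sheafι hB).hom := inferInstanceAs (Mono B.ι)
  Sheaf.Hom.mono_of_presheaf_mono J _ _

end Subfunctor

namespace Sheaf

variable {G : Sheaf J (Type w)}

lemma range_subobjectMk_arrow {A : Sheaf J (Type w)} (f : A ⟶ G) [Mono f] :
    Subfunctor.range (Subobject.mk f).arrow.hom = Subfunctor.range f.hom := by
  conv_rhs => rw [← Subobject.underlyingIso_arrow f]
  rw [ObjectProperty.FullSubcategory.comp_hom, Subfunctor.range_comp,
    Subfunctor.range_eq_top (p := (Subobject.underlyingIso f).inv.hom), Subfunctor.image_top]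

lemma isSheaf_range_arrow (S : Subobject G) :
    Presieve.IsSheaf J (Subfunctor.range S.arrow.hom).toFunctor :=
  Presieve.isSheaf_iso J (asIso (Subfunctor.toRange S.arrow.hom))
    ((isSheaf_iff_isSheaf_of_type _ _).1 (S : Sheaf J (Type w)).property)

lemma subobjectMk_sheafι_range_arrow (S : Subobject G) :
    Subobject.mk ((Subfunctor.range S.arrow.hom).sheafι (isSheaf_range_arrow S)) = S := by
  refine Subobject.mk_eq_of_comm _
    (ObjectProperty.isoMk _ (asIso (Subfunctor.toRange S.arrow.hom)).symm) ?_
  ext1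
  exact (IsIso.inv_comp_eq (Subfunctor.toRange S.arrow.hom)).2 (Subfunctor.toRange_ι _).symm

variable (G) in
noncomputable def subobjectOrderIsoClosedSubfunctor :
    Subobject G ≃o ClosedSubfunctor J G.obj :=
  have hG : Presieve.IsSheaf J G.obj := (isSheaf_iff_isSheaf_of_type _ _).1 G.property
  Equiv.toOrderIso
    { toFun S := ⟨Subfunctor.range S.arrow.hom,
        ((Subfunctor.eq_sheafify_iff _ hG).2 (isSheaf_range_arrow S)).symm⟩
      invFun B := Subobject.mk (B.1.sheafι ((Subfunctor.eq_sheafify_iff _ hG).1 B.2.symm))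
      left_inv := subobjectMk_sheafι_range_arrow
      right_inv B := Subtype.ext ((range_subobjectMk_arrow _).trans (Subfunctor.range_ι _)) }
    (fun S S' h => by
      change Subfunctor.range S.arrow.hom ≤ Subfunctor.range S'.arrow.hom
      rw [← Subobject.ofLE_arrow h]
      exact Subfunctor.range_comp_le _ _)
    (fun B B' h => Subobject.mk_le_mk_of_comm
      (ObjectProperty.homMk (Subfunctor.homOfLe (show B.1 ≤ B'.1 from h))) (by ext1; rfl))

end Sheaf

end CategoryTheory

namespace Stmt2

variable {C : Type u} [SmallCategory C]

/-- Proposition 2.3: for any presheaf `F` on a site `(C, J)`, the lattice of subobjects of the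
sheafification `a_J(F)` in `Sh(C, J)` is isomorphic to the lattice of `c_J`-closed subobjects
(subpresheaves) of `F`, the isomorphism sending a subobject of `a_J(F)` to its pullback along
the unit `F ⟶ a_J(F)` (and, inversely, a closed subpresheaf to its image under `a_J`). -/
theorem subobject_sheafification_orderIso (J : GrothendieckTopology C) (F : Cᵒᵖ ⥤ Type u) :
    ∃ e : {A : Subfunctor F // A.sheafify J = A} ≃o
        Subobject ((presheafToSheaf J (Type u)).obj F),
      ∀ S : Subobject ((presheafToSheaf J (Type u)).obj F),
        (e.symm S).1 = unitPullback J F S :=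
  ⟨(ClosedSubfunctor.orderIsoOfIsLocallyBijective (CategoryTheory.toSheafify J F)).trans
    (Sheaf.subobjectOrderIsoClosedSubfunctor _).symm, fun _ => rfl⟩

end Stmt2
end

section
/- Let L : F ⟶ E and R : E ⟶ F be adjoint functors with L ⊣ R between categories E and F with E having enough structure (e.g. a topos). Then R is faithful if and only if for every object e of E there exist an object u of F and an epimorphism L(u) ⟶ e. -/
open CategoryTheory

universe v₁ v₂ u₁ u₂

/-!
`R` is faithful exactly when every counit component `ε_e : L (R e) ⟶ e` is epi, and every
morphism `p : L u ⟶ e` factors through `ε_e` via its adjoint transpose, so an epi `p` forces `ε_e`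
to be epi.
-/

namespace Stmt3

lemma epi_counit_app_of_epi {E : Type u₁} {F : Type u₂} [Category.{v₁} E] [Category.{v₂} F]
    {L : F ⥤ E} {R : E ⥤ F} (adj : L ⊣ R) {u : F} {e : E} (p : L.obj u ⟶ e) [Epi p] :
    Epi (adj.counit.app e) :=
  epi_of_epi_fac (f := L.map (adj.homEquiv u e p)) (h := p)
    ((adj.homEquiv_counit ..).symm.trans ((adj.homEquiv u e).symm_apply_apply p))

/-- Proposition 4.3: given an adjunction `L ⊣ R` with `R : E ⥤ F` and `L : F ⥤ E`, the right
adjoint `R` is faithful if and only if for every object `e` of `E` there exist an object `u` of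
`F` and an epimorphism `L(u) ⟶ e`. -/
theorem rightAdjoint_faithful_iff {E : Type u₁} {F : Type u₂} [Category.{v₁} E] [Category.{v₂} F]
    (L : F ⥤ E) (R : E ⥤ F) (adj : L ⊣ R) :
    R.Faithful ↔ ∀ e : E, ∃ (u : F) (p : L.obj u ⟶ e), Epi p := by
  constructor
  · intro _ e
    exact ⟨R.obj e, adj.counit.app e, inferInstance⟩
  · intro h
    have (e : E) : Epi (adj.counit.app e) := by
      obtain ⟨u, p, _⟩ := h e
      exact epi_counit_app_of_epi adj p
    exact adj.faithful_R_of_epi_counit_app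

end Stmt3
end

section
/- Let p : C ⟶ D be a (Street) fibration and P a presieve in C consisting entirely of p-cartesian arrows with common codomain c. Then the sieve generated by P equals the sieve S of all arrows f with codomain c such that p(f) lies in the sieve generated by p(P); that is, ⟨P⟩ = {f : dom(f) ⟶ c | p(f) ∈ ⟨p(P)⟩}. -/
open CategoryTheory

universe v₁ v₂ u₁ u₂

namespace Stmt5

variable {C : Type u₁} {D : Type u₂} [Category.{v₁} C] [Category.{v₂} D]

/-- An arrow `φ : c' ⟶ c` is cartesian relative to `p : C ⥤ D` if for every `ψ : c'' ⟶ c` and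
`g : p(c'') ⟶ p(c')` with `p(φ) ∘ g = p(ψ)` there is a unique `χ : c'' ⟶ c'` with `φ ∘ χ = ψ`
and `p(χ) = g`. -/
def IsCartesianArrow (p : C ⥤ D) {c' c : C} (φ : c' ⟶ c) : Prop :=
  ∀ {c'' : C} (ψ : c'' ⟶ c) (g : p.obj c'' ⟶ p.obj c'),
    g ≫ p.map φ = p.map ψ → ∃! χ : c'' ⟶ c', χ ≫ φ = ψ ∧ p.map χ = g

/-- A functor `p : C ⥤ D` is a fibration in the sense of Street if for every arrow
`f : d ⟶ p(c)` in `D` there are a cartesian arrow `φ : c' ⟶ c` and an isomorphism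
`α : p(c') ≅ d` with `f ∘ α = p(φ)`. -/
def IsStreetFibration (p : C ⥤ D) : Prop :=
  ∀ {c : C} {d : D} (f : d ⟶ p.obj c),
    ∃ (c' : C) (φ : c' ⟶ c) (α : p.obj c' ≅ d),
      IsCartesianArrow p φ ∧ α.hom ≫ f = p.map φ

theorem IsCartesianArrow.exists_comp_eq {p : C ⥤ D} {c' c : C} {φ : c' ⟶ c}
    (hφ : IsCartesianArrow p φ) {c'' : C} {ψ : c'' ⟶ c} (g : p.obj c'' ⟶ p.obj c')
    (hg : g ≫ p.map φ = p.map ψ) : ∃ χ : c'' ⟶ c', χ ≫ φ = ψ :=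
  (hφ ψ g hg).exists.imp fun _ h => h.1

theorem generate_le_functorPullback_generate_functorPushforward (p : C ⥤ D) {c : C}
    (P : Presieve c) :
    Sieve.generate P ≤ Sieve.functorPullback p (Sieve.generate (P.functorPushforward p)) :=
  (Sieve.generate_le_iff _ _).2 fun _ _ hf =>
    Sieve.le_generate _ _ _ (P.image_mem_functorPushforward p hf)

theorem functorPullback_generate_functorPushforward_le_of_isCartesianArrow (p : C ⥤ D) {c : C}
    (P : Presieve c) (hP : ∀ ⦃c' : C⦄ (f : c' ⟶ c), P f → IsCartesianArrow p f) :
    Sieve.functorPullback p (Sieve.generate (P.functorPushforward p)) ≤ Sieve.generate P := by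
  rintro X f ⟨Y, u, v, ⟨Z, φ, w, hφ, rfl⟩, hf⟩
  obtain ⟨χ, hχ⟩ :=
    IsCartesianArrow.exists_comp_eq (hP φ hφ) (u ≫ w) (by rw [Category.assoc, ← hf])
  exact ⟨Z, χ, φ, hφ, hχ⟩

theorem generate_cartesian_presieve_eq_general (p : C ⥤ D) {c : C}
    (P : Presieve c) (hP : ∀ ⦃c' : C⦄ (f : c' ⟶ c), P f → IsCartesianArrow p f) :
    Sieve.generate P =
      Sieve.functorPullback p (Sieve.generate (Presieve.functorPushforward p P)) :=
  le_antisymm (generate_le_functorPullback_generate_functorPushforward p P)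
    (functorPullback_generate_functorPushforward_le_of_isCartesianArrow p P hP)

/-- Lemma 2.15(iii): if `p : C ⥤ D` is a fibration and `P` is a presieve on `c` consisting
entirely of `p`-cartesian arrows, then the sieve generated by `P` is exactly the sieve of arrows
`f` with codomain `c` such that `p(f)` belongs to the sieve generated by `p(P)`. -/
theorem generate_cartesian_presieve_eq (p : C ⥤ D) (hp : IsStreetFibration p) {c : C}
    (P : Presieve c) (hP : ∀ ⦃c' : C⦄ (f : c' ⟶ c), P f → IsCartesianArrow p f) :
    Sieve.generate P =
      Sieve.functorPullback p (Sieve.generate (Presieve.functorPushforward p P)) :=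
  generate_cartesian_presieve_eq_general p P hP

end Stmt5
end

section
/- Let p : C ⟶ D be a fibration and R a sieve on p(c) in D. Then the sieve S = {f with codomain c | p(f) ∈ R} is generated by the collection of its cartesian arrows. -/
open CategoryTheory

universe v₁ v₂ u₁ u₂

namespace Stmt6

variable {C : Type u₁} {D : Type u₂} [Category.{v₁} C] [Category.{v₂} D]

/-- An arrow `φ : c' ⟶ c` is cartesian relative to `p : C ⥤ D`. -/
def IsCartesianArrow (p : C ⥤ D) {c' c : C} (φ : c' ⟶ c) : Prop :=
  ∀ {c'' : C} (ψ : c'' ⟶ c) (g : p.obj c'' ⟶ p.obj c'),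
    g ≫ p.map φ = p.map ψ → ∃! χ : c'' ⟶ c', χ ≫ φ = ψ ∧ p.map χ = g

/-- A functor `p : C ⥤ D` is a fibration in the sense of Street. -/
def IsStreetFibration (p : C ⥤ D) : Prop :=
  ∀ {c : C} {d : D} (f : d ⟶ p.obj c),
    ∃ (c' : C) (φ : c' ⟶ c) (α : p.obj c' ≅ d),
      IsCartesianArrow p φ ∧ α.hom ≫ f = p.map φ

theorem IsStreetFibration.exists_factor_through_cartesian {p : C ⥤ D}
    (hp : IsStreetFibration p) {c'' c : C} (f : c'' ⟶ c) :
    ∃ (c' : C) (χ : c'' ⟶ c') (φ : c' ⟶ c) (g : p.obj c' ⟶ p.obj c''),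
      IsCartesianArrow p φ ∧ χ ≫ φ = f ∧ p.map φ = g ≫ p.map f := by
  obtain ⟨c', φ, α, hφ, hα⟩ := hp (p.map f)
  obtain ⟨χ, ⟨hχ, -⟩, -⟩ := hφ f α.inv (by rw [← hα, Iso.inv_hom_id_assoc])
  exact ⟨c', χ, φ, α.hom, hφ, hχ, hα.symm⟩

/-- Lemma 2.15(v): if `p : C ⥤ D` is a fibration and `R` is a sieve on `p(c)` in `D`, then the
sieve `S = {f with codomain c | p(f) ∈ R}` is generated by the collection of its cartesian
arrows. -/
theorem functorPullback_generated_by_cartesian (p : C ⥤ D) (hp : IsStreetFibration p)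
    {c : C} (R : Sieve (p.obj c)) :
    Sieve.functorPullback p R =
      Sieve.generate (fun _ f => R.arrows (p.map f) ∧ IsCartesianArrow p f) := by
  refine le_antisymm (fun c'' f hf => ?_) ((Sieve.generate_le_iff _ _).2 fun _ _ hf => hf.1)
  obtain ⟨c', χ, φ, g, hφ, hχ, hpφ⟩ := hp.exists_factor_through_cartesian f
  exact ⟨c', χ, φ, ⟨hpφ ▸ R.downward_closed hf g, hφ⟩, hχ⟩

end Stmt6
end

section
/- Let p : C ⟶ D be a fibration and K a Grothendieck topology on D. Then the smallest Grothendieck topology M on C making p a comorphism of sites (C, M) ⟶ (D, K) admits the following description: a sieve R on an object c of C is M-covering if and only if the family of p-cartesian arrows contained in R is sent by p to a K-covering family. -/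
open CategoryTheory

universe v₁ v₂ u₁ u₂

namespace Stmt7

variable {C : Type u₁} {D : Type u₂} [Category.{v₁} C] [Category.{v₂} D]

/-- An arrow `φ : c' ⟶ c` is cartesian relative to `p : C ⥤ D`. -/
def IsCartesianArrow (p : C ⥤ D) {c' c : C} (φ : c' ⟶ c) : Prop :=
  ∀ {c'' : C} (ψ : c'' ⟶ c) (g : p.obj c'' ⟶ p.obj c'),
    g ≫ p.map φ = p.map ψ → ∃! χ : c'' ⟶ c', χ ≫ φ = ψ ∧ p.map χ = g

/-- A functor `p : C ⥤ D` is a fibration in the sense of Street. -/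
def IsStreetFibration (p : C ⥤ D) : Prop :=
  ∀ {c : C} {d : D} (f : d ⟶ p.obj c),
    ∃ (c' : C) (φ : c' ⟶ c) (α : p.obj c' ≅ d),
      IsCartesianArrow p φ ∧ α.hom ≫ f = p.map φ

/-- `p` is a comorphism of sites `(C, M) ⟶ (D, K)`, i.e. it has the covering-lifting property:
every `K`-covering sieve on `p(c)` contains the image under `p` of an `M`-covering sieve. -/
def HasCoverLifting (p : C ⥤ D) (M : GrothendieckTopology C) (K : GrothendieckTopology D) :
    Prop :=
  ∀ ⦃c : C⦄ (S : Sieve (p.obj c)), S ∈ K (p.obj c) →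
    ∃ R ∈ M c, ∀ ⦃d : C⦄ (f : d ⟶ c), R.arrows f → S.arrows (p.map f)

/- Cartesian lifts replace every arrow of a sieve `S` on `p c` by the image of a cartesian arrow
of `S.functorPullback p` over it, so `S ≤ cartesianPushforward p (S.functorPullback p)`; conversely
a cartesian arrow of `R` absorbs every arrow lying over a factorisation through its image, so
`(cartesianPushforward p R).functorPullback p ≤ R`. The first inequality gives the stability axioms
and cover lifting for the sieves `R` with `cartesianPushforward p R` covering, the second shows
that any topology with cover lifting contains them. -/

lemma IsCartesianArrow.comp {p : C ⥤ D} {a b c : C} {v : b ⟶ a} {u : a ⟶ c}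
    (hv : IsCartesianArrow p v) (hu : IsCartesianArrow p u) :
    IsCartesianArrow p (v ≫ u) := by
  intro e ψ g hg
  rw [p.map_comp, ← Category.assoc] at hg
  obtain ⟨χ₁, ⟨hχ₁u, hχ₁p⟩, hχ₁_uniq⟩ := hu ψ (g ≫ p.map v) hg
  obtain ⟨χ, ⟨hχv, hχp⟩, hχ_uniq⟩ := hv χ₁ g hχ₁p.symm
  refine ⟨χ, ⟨by rw [← Category.assoc, hχv, hχ₁u], hχp⟩, ?_⟩
  rintro χ' ⟨hχ'u, hχ'p⟩
  have hχ'v : χ' ≫ v = χ₁ :=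
    hχ₁_uniq (χ' ≫ v) ⟨by rw [Category.assoc, hχ'u], by rw [p.map_comp, hχ'p]⟩
  exact hχ_uniq χ' ⟨hχ'v, hχ'p⟩

lemma IsCartesianArrow.mem_of_comp_map_eq {p : C ⥤ D} {c e x : C} {R : Sieve c} {u : e ⟶ c}
    (hu : IsCartesianArrow p u) (huR : R.arrows u) {f : x ⟶ c} {h : p.obj x ⟶ p.obj e}
    (hf : h ≫ p.map u = p.map f) : R.arrows f := by
  obtain ⟨χ, ⟨hχ, -⟩, -⟩ := hu f h hf
  exact hχ ▸ R.downward_closed huR χ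

def cartesianPushforward (p : C ⥤ D) {c : C} (R : Sieve c) : Sieve (p.obj c) :=
  Sieve.generate (Presieve.functorPushforward p
    (fun _ f => R.arrows f ∧ IsCartesianArrow p f))

section cartesianPushforward

variable {p : C ⥤ D} {c : C}

lemma mem_cartesianPushforward {R : Sieve c} {X : D} {f : X ⟶ p.obj c} :
    (cartesianPushforward p R).arrows f ↔
      ∃ (e : C) (u : e ⟶ c) (h : X ⟶ p.obj e),
        R.arrows u ∧ IsCartesianArrow p u ∧ f = h ≫ p.map u := by
  constructor
  · rintro ⟨Y, l, g, ⟨Z, u, h, ⟨hu, hcu⟩, rfl⟩, rfl⟩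
    exact ⟨Z, u, l ≫ h, hu, hcu, by simp⟩
  · rintro ⟨e, u, h, hu, hcu, rfl⟩
    exact ⟨X, 𝟙 X, h ≫ p.map u, ⟨e, u, h, ⟨hu, hcu⟩, rfl⟩, by simp⟩

lemma cartesianPushforward_mono {R R' : Sieve c} (h : R ≤ R') :
    cartesianPushforward p R ≤ cartesianPushforward p R' :=
  Sieve.generate_mono fun _ _ ⟨e, u, k, ⟨hu, hcu⟩, hf⟩ => ⟨e, u, k, ⟨h _ hu, hcu⟩, hf⟩

lemma functorPullback_cartesianPushforward_le (R : Sieve c) :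
    (cartesianPushforward p R).functorPullback p ≤ R := by
  intro x f hf
  obtain ⟨e, u, h, huR, hu, hf⟩ := mem_cartesianPushforward.1 hf
  exact hu.mem_of_comp_map_eq huR hf.symm

lemma le_cartesianPushforward_functorPullback (hp : IsStreetFibration p)
    (S : Sieve (p.obj c)) : S ≤ cartesianPushforward p (S.functorPullback p) := by
  intro X g hg
  obtain ⟨c', φ, α, hφ, hα⟩ := hp g
  have hφS : S.arrows (p.map φ) := hα ▸ S.downward_closed hg α.hom
  exact mem_cartesianPushforward.2 ⟨c', φ, α.inv, hφS, hφ, by simp [← hα]⟩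

lemma cartesianPushforward_top (hp : IsStreetFibration p) :
    cartesianPushforward p (⊤ : Sieve c) = ⊤ :=
  top_unique (le_cartesianPushforward_functorPullback hp ⊤)

lemma pullback_cartesianPushforward_le (hp : IsStreetFibration p) (R : Sieve c) {d : C}
    (f : d ⟶ c) :
    (cartesianPushforward p R).pullback (p.map f) ≤ cartesianPushforward p (R.pullback f) := by
  refine (le_cartesianPushforward_functorPullback hp _).trans (cartesianPushforward_mono ?_)
  intro x g hg
  have hgf : (cartesianPushforward p R).arrows (p.map (g ≫ f)) := by
    simpa [Sieve.functorPullback, Presieve.functorPullback] using hg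
  exact functorPullback_cartesianPushforward_le R _ hgf

lemma cartesianPushforward_pullback_le {R : Sieve c} {a : C} {u : a ⟶ c}
    (hu : IsCartesianArrow p u) :
    cartesianPushforward p (R.pullback u) ≤ (cartesianPushforward p R).pullback (p.map u) := by
  intro X g hg
  obtain ⟨b, v, h, hvR, hv, rfl⟩ := mem_cartesianPushforward.1 hg
  exact mem_cartesianPushforward.2 ⟨b, v ≫ u, h, hvR, hv.comp hu, by simp⟩

end cartesianPushforward

def cartesianTopology {p : C ⥤ D} (hp : IsStreetFibration p) (K : GrothendieckTopology D) :
    GrothendieckTopology C where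
  sieves c := {R | cartesianPushforward p R ∈ K (p.obj c)}
  top_mem' c := by
    show cartesianPushforward p ⊤ ∈ K _
    rw [cartesianPushforward_top hp]
    exact K.top_mem _
  pullback_stable' _ _ R f hR :=
    K.superset_covering (pullback_cartesianPushforward_le hp R f) (K.pullback_stable _ hR)
  transitive' _ S hS R hR := by
    refine K.transitive hS _ fun X g hg => ?_
    obtain ⟨a, u, k, huS, hu, rfl⟩ := mem_cartesianPushforward.1 hg
    rw [Sieve.pullback_comp]
    exact K.pullback_stable k (K.superset_covering (cartesianPushforward_pullback_le hu) (hR huS))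

section cartesianTopology

variable {p : C ⥤ D} (hp : IsStreetFibration p) (K : GrothendieckTopology D)

lemma hasCoverLifting_cartesianTopology : HasCoverLifting p (cartesianTopology hp K) K :=
  fun _ S hS => ⟨S.functorPullback p,
    K.superset_covering (le_cartesianPushforward_functorPullback hp S) hS, fun _ _ hf => hf⟩

lemma cartesianTopology_le_of_hasCoverLifting {M : GrothendieckTopology C}
    (hM : HasCoverLifting p M K) : cartesianTopology hp K ≤ M := by
  intro c R hR
  obtain ⟨R₀, hR₀, hR₀R⟩ := hM _ hR
  exact M.superset_covering
    (fun _ f hf => functorPullback_cartesianPushforward_le R _ (hR₀R f hf)) hR₀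

end cartesianTopology

/-- Theorem 2.16: if `p : C ⥤ D` is a fibration and `K` a Grothendieck topology on `D`, then
the smallest Grothendieck topology `M` on `C` making `p` a comorphism of sites
`(C, M) ⟶ (D, K)` is described as follows: a sieve `R` on an object `c` of `C` is `M`-covering
if and only if the family of `p`-cartesian arrows contained in `R` is sent by `p` to a
`K`-covering family. -/
theorem smallest_comorphism_topology_of_fibration (p : C ⥤ D) (hp : IsStreetFibration p)
    (K : GrothendieckTopology D) (M : GrothendieckTopology C)
    (h1 : HasCoverLifting p M K)
    (h2 : ∀ M' : GrothendieckTopology C, HasCoverLifting p M' K → M ≤ M') :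
    ∀ (c : C) (R : Sieve c),
      R ∈ M c ↔
        Sieve.generate (Presieve.functorPushforward p
          (fun _ f => R.arrows f ∧ IsCartesianArrow p f)) ∈ K (p.obj c) := by
  have hM : M = cartesianTopology hp K :=
    le_antisymm (h2 _ (hasCoverLifting_cartesianTopology hp K))
      (cartesianTopology_le_of_hasCoverLifting hp K h1)
  subst hM
  exact fun _ _ => Iff.rfl

end Stmt7
end

section
/- Let J' be a collection of sieves on a category C and J the Grothendieck topology generated by J'. Then every morphism of sites (C, J') ⟶ (D, K) (i.e., a covering-flat functor sending sieves in J' to K-covering families) is a morphism of sites (C, J) ⟶ (D, K); in particular, the collection of sieves S in C such that F(S) generates a K-covering sieve forms a Grothendieck topology whenever F is covering-flat. -/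
open CategoryTheory Limits

universe v₁ v₂ u₁ u₂

namespace Stmt8

variable {C : Type u₁} {D : Type u₂} [Category.{v₁} C] [Category.{v₂} D]

/-- Given a finite diagram `X` in `C` and a cone `c` over `X ⋙ F` in `D`, the sieve on the
vertex of `c` consisting of those arrows `g` such that the cone restricted along `g` factors
through the `F`-image of a cone over `X`. -/
def coneFactorSieve (F : C ⥤ D) {I : Type} [SmallCategory I] (X : I ⥤ C)
    (c : Cone (X ⋙ F)) : Sieve c.pt where
  arrows _ g := ∃ (z : Cone X) (w : _ ⟶ F.obj z.pt),
    ∀ i : I, w ≫ F.map (z.π.app i) = g ≫ c.π.app i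
  downward_closed := by
    rintro d' e g ⟨z, w, hw⟩ h
    exact ⟨z, h ≫ w, fun i => by simp only [Category.assoc, hw i]⟩

/-- A functor `F : C ⥤ D` is covering-flat with respect to a Grothendieck topology `K` on `D`
if for every finite diagram in `C`, every cone over its composite with `F` factors `K`-locally
through the `F`-image of a cone over the diagram. -/
def CoveringFlat (F : C ⥤ D) (K : GrothendieckTopology D) : Prop :=
  ∀ (I : Type) [SmallCategory I] [FinCategory I] (X : I ⥤ C) (c : Cone (X ⋙ F)),
    coneFactorSieve F X c ∈ K c.pt

/- Sieves whose image under `F` generates a `K`-covering sieve are closed under transitivity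
for any functor. Stability under pullback along `g : d ⟶ c` is where covering-flatness enters:
an arrow `r` with `r ≫ F g` factoring through `F f` for some `f ∈ S` is a cone over the image of
the cospan `(f, g)`; flatness factors it `K`-locally through the image of a cone `z` over that
cospan, and `z.snd ≫ g = z.fst ≫ f ∈ S` puts `z.snd` into `S.pullback g`. Since the resulting
topology contains `J'`, it contains the topology `J` generated by `J'`. -/

section

variable {F : C ⥤ D} {K : GrothendieckTopology D}

lemma functorPushforward_mem_transitive {c : C} {S R : Sieve c}
    (hS : S.functorPushforward F ∈ K (F.obj c))
    (hR : ∀ ⦃d : C⦄ ⦃f : d ⟶ c⦄, S f → (R.pullback f).functorPushforward F ∈ K (F.obj d)) :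
    R.functorPushforward F ∈ K (F.obj c) := by
  refine K.transitive hS _ ?_
  rintro e g ⟨d, f, u, hf, rfl⟩
  refine K.superset_covering ?_ (K.pullback_stable u (hR hf))
  rw [Sieve.pullback_comp]
  exact Sieve.pullback_monotone u (Sieve.functorPushforward_pullback_le F f R)

namespace CoveringFlat

lemma pullback_functorPushforward_pullback_mem (hflat : CoveringFlat F K) {c d : C}
    {S : Sieve c} (g : d ⟶ c) {e : D} {r : e ⟶ F.obj d}
    (hr : S.functorPushforward F (r ≫ F.map g)) :
    ((S.pullback g).functorPushforward F).pullback r ∈ K e := by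
  obtain ⟨c', f, u, hf, hfac⟩ := hr
  let cone : Cone (cospan f g ⋙ F) :=
    (Cone.postcompose (cospanCompIso F f g).inv).obj (PullbackCone.mk u r hfac.symm)
  refine K.superset_covering ?_ (hflat _ (cospan f g) cone)
  rintro e' q ⟨z, w, hw⟩
  have hsnd : w ≫ F.map (z.π.app WalkingCospan.right) = q ≫ r := by
    simpa [cone] using (hw WalkingCospan.right).trans (congrArg (q ≫ ·) (Category.comp_id r))
  have hz : (S.pullback g) (z.π.app WalkingCospan.right) := by
    change S (PullbackCone.snd z ≫ g)
    rw [← PullbackCone.condition z]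
    exact S.downward_closed hf _
  exact ⟨z.pt, _, w, hz, hsnd.symm⟩

lemma functorPushforward_pullback_mem (hflat : CoveringFlat F K) {c d : C} {S : Sieve c}
    (hS : S.functorPushforward F ∈ K (F.obj c)) (g : d ⟶ c) :
    (S.pullback g).functorPushforward F ∈ K (F.obj d) :=
  K.transitive (K.pullback_stable (F.map g) hS) _ fun _ _ hr =>
    pullback_functorPushforward_pullback_mem hflat g hr

def functorPushforwardTopology (hflat : CoveringFlat F K) : GrothendieckTopology C where
  sieves c := {S | S.functorPushforward F ∈ K (F.obj c)}
  top_mem' c := by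
    change _ ∈ K _
    rw [Sieve.functorPushforward_top]
    exact K.top_mem _
  pullback_stable' _ _ _ g hS := functorPushforward_pullback_mem hflat hS g
  transitive' _ _ hS _ hR := functorPushforward_mem_transitive hS hR

lemma mem_functorPushforwardTopology (hflat : CoveringFlat F K) {c : C} (S : Sieve c) :
    S ∈ hflat.functorPushforwardTopology c ↔ S.functorPushforward F ∈ K (F.obj c) :=
  Iff.rfl

end CoveringFlat

end

theorem morphism_of_sites_generated_general (K : GrothendieckTopology D) (F : C ⥤ D)
    (J' : ∀ c : C, Set (Sieve c)) (J : GrothendieckTopology C)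
    (hJ2 : ∀ J₂ : GrothendieckTopology C,
      (∀ (c : C) (S : Sieve c), S ∈ J' c → S ∈ J₂ c) → J ≤ J₂)
    (hflat : CoveringFlat F K)
    (hcov : ∀ (c : C) (S : Sieve c), S ∈ J' c →
      Sieve.functorPushforward F S ∈ K (F.obj c)) :
    (∀ (c : C) (S : Sieve c), S ∈ J c → Sieve.functorPushforward F S ∈ K (F.obj c)) ∧
    ∃ JF : GrothendieckTopology C, ∀ (c : C) (S : Sieve c),
      S ∈ JF c ↔ Sieve.functorPushforward F S ∈ K (F.obj c) :=
  ⟨fun c _ hS => hJ2 hflat.functorPushforwardTopology hcov c hS,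
    hflat.functorPushforwardTopology, fun _ => hflat.mem_functorPushforwardTopology⟩

/-- Proposition 2.10: let `J'` be a collection of sieves on `C` and `J` the Grothendieck
topology generated by it.  Then every morphism of sites `(C, J') ⟶ (D, K)` (i.e. a
covering-flat functor sending the sieves of `J'` to families generating `K`-covering sieves)
is a morphism of sites `(C, J) ⟶ (D, K)`; in particular, for a covering-flat functor `F`, the
collection of sieves `S` such that `F(S)` generates a `K`-covering sieve is a Grothendieck
topology. -/
theorem morphism_of_sites_generated (K : GrothendieckTopology D) (F : C ⥤ D)
    (J' : ∀ c : C, Set (Sieve c)) (J : GrothendieckTopology C)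
    (hJ1 : ∀ (c : C) (S : Sieve c), S ∈ J' c → S ∈ J c)
    (hJ2 : ∀ J₂ : GrothendieckTopology C,
      (∀ (c : C) (S : Sieve c), S ∈ J' c → S ∈ J₂ c) → J ≤ J₂)
    (hflat : CoveringFlat F K)
    (hcov : ∀ (c : C) (S : Sieve c), S ∈ J' c →
      Sieve.functorPushforward F S ∈ K (F.obj c)) :
    (∀ (c : C) (S : Sieve c), S ∈ J c → Sieve.functorPushforward F S ∈ K (F.obj c)) ∧
    ∃ JF : GrothendieckTopology C, ∀ (c : C) (S : Sieve c),
      S ∈ JF c ↔ Sieve.functorPushforward F S ∈ K (F.obj c) :=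
  morphism_of_sites_generated_general K F J' J hJ2 hflat hcov

end Stmt8
end

section
/- Let F : C ⟶ D be a functor and K a Grothendieck topology on D, and suppose F is J-full and J-faithful for a Grothendieck topology J on C. Then for any sieve R on an object c of C and any arrow t with codomain c, if F(t) belongs to the sieve generated by F(R), then there exists a J-covering sieve U on dom(t) such that t ∘ u ∈ R for all u ∈ U. -/
open CategoryTheory

universe v₁ v₂ u₁ u₂

namespace Stmt9

variable {C : Type u₁} {D : Type u₂} [Category.{v₁} C] [Category.{v₂} D]

/-- The sieve on `x` of arrows `f` such that `F(f) ≫ g` comes from an arrow of `C`. -/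
def liftSieve (F : C ⥤ D) {x y : C} (g : F.obj x ⟶ F.obj y) : Sieve x where
  arrows _ f := ∃ g' : _ ⟶ y, F.map f ≫ g = F.map g'
  downward_closed := by
    rintro x' x'' f ⟨g', hg'⟩ h
    exact ⟨h ≫ g', by simp only [Functor.map_comp, Category.assoc, hg']⟩

/-- The sieve of arrows equalizing two parallel arrows `h, k`. -/
def equalizingSieve {x y : C} (h k : x ⟶ y) : Sieve x where
  arrows _ f := f ≫ h = f ≫ k
  downward_closed := by
    intro x' x'' f hf g
    simp only [Category.assoc, hf]

/-- `F` is `J`-full: every arrow `g : F(x) ⟶ F(y)` locally (on a `J`-covering family)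
coincides with arrows coming from `C`. -/
def JFull (F : C ⥤ D) (J : GrothendieckTopology C) : Prop :=
  ∀ {x y : C} (g : F.obj x ⟶ F.obj y), liftSieve F g ∈ J x

/-- `F` is `J`-faithful: if `F(h) = F(k)` then `h` and `k` are `J`-locally equal. -/
def JFaithful (F : C ⥤ D) (J : GrothendieckTopology C) : Prop :=
  ∀ {x y : C} (h k : x ⟶ y), F.map h = F.map k → equalizingSieve h k ∈ J x

lemma equalizingSieve_le_pullback {x y : C} {h k : x ⟶ y} {R : Sieve y} (hk : R.arrows k) :
    equalizingSieve h k ≤ R.pullback h := by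
  intro _ e (he : e ≫ h = e ≫ k)
  simpa only [Sieve.pullback_apply, he] using R.downward_closed hk e

lemma JFaithful.pullback_mem_of_map_eq {F : C ⥤ D} {J : GrothendieckTopology C}
    (hfaithful : JFaithful F J) {x y : C} {h k : x ⟶ y} {R : Sieve y} (hk : R.arrows k)
    (hF : F.map h = F.map k) : R.pullback h ∈ J x :=
  J.superset_covering (equalizingSieve_le_pullback hk) (hfaithful h k hF)

/-- `J`-fullness lifts `h` locally to arrows `g'` of `C`, and along each lift `F` identifies
`t` with `g' ≫ g ∈ R`, so `J`-faithfulness finishes by local transitivity. -/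
lemma pullback_mem_of_map_eq_comp_map {F : C ⥤ D} {J : GrothendieckTopology C}
    (hfull : JFull F J) (hfaithful : JFaithful F J) {a c z : C} {R : Sieve c} {t : a ⟶ c}
    {g : z ⟶ c} (hg : R.arrows g) (h : F.obj a ⟶ F.obj z) (ht : F.map t = h ≫ F.map g) :
    R.pullback t ∈ J a := by
  refine J.transitive (hfull h) _ ?_
  rintro a' f ⟨g', hg'⟩
  have hF : F.map (f ≫ t) = F.map (g' ≫ g) := by
    rw [F.map_comp, F.map_comp, ht, ← Category.assoc, hg']
  rw [← Sieve.pullback_comp]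
  exact hfaithful.pullback_mem_of_map_eq (R.downward_closed hg g') hF

/-- Lemma 5.25(i): if `F : C ⥤ D` is `J`-full and `J`-faithful, `R` is a sieve on `c` and `t`
an arrow with codomain `c` such that `F(t)` belongs to the sieve generated by `F(R)`, then
there is a `J`-covering sieve `U` on the domain of `t` with `t ∘ u ∈ R` for all `u ∈ U`. -/
theorem local_factorization (F : C ⥤ D) (J : GrothendieckTopology C)
    (hfull : JFull F J) (hfaithful : JFaithful F J)
    {c a : C} (R : Sieve c) (t : a ⟶ c)
    (ht : (Sieve.functorPushforward F R).arrows (F.map t)) :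
    ∃ U ∈ J a, ∀ ⦃a' : C⦄ (u : a' ⟶ a), U.arrows u → R.arrows (u ≫ t) := by
  obtain ⟨_, g, h, hg, hFt⟩ := ht
  exact ⟨R.pullback t, pullback_mem_of_map_eq_comp_map hfull hfaithful hg h hFt,
    fun _ _ hu => hu⟩

end Stmt9
end

section
/- Let F : C ⟶ D be a functor and J a Grothendieck topology on C. Then the collection of sieves J^F on D, defined by: T ∈ J^F(d) iff for every object c of C and every arrow ξ : F(c) ⟶ d there is a J-covering sieve R on c with F(R) ⊆ ξ*(T), is a Grothendieck topology on D, and the functor F : (C,J) ⟶ (D,J^F) is J^F-dense and has the covering-lifting property. -/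
/-!
The largest sieve `R` on `c` with `F(R) ⊆ ξ*(T)` is `(ξ*T).functorPullback F`, so `T` is
`J^F`-covering iff all these functor-pullbacks are `J`-covering. Since functor-pullback commutes
with pullback, the axioms of `J^F` reduce to those of `J`. Density holds because the sieve of
arrows factoring through the image of `F` pulls back to `⊤` along every `ξ : F(c) ⟶ d`, and
cover-lifting is the defining condition at `ξ = 𝟙`.
-/

open CategoryTheory

universe v₁ v₂ u₁ u₂

namespace Stmt11

variable {C : Type u₁} {D : Type u₂} [Category.{v₁} C] [Category.{v₂} D]

/-- A sieve `T` on `d : D` satisfies the defining condition of the topology coinduced by `J`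
along `F` if for every object `c` of `C` and arrow `ξ : F(c) ⟶ d` there is a `J`-covering
sieve `R` on `c` with `F(R) ⊆ ξ*(T)`. -/
def CoinducedCovers (F : C ⥤ D) (J : GrothendieckTopology C) {d : D} (T : Sieve d) : Prop :=
  ∀ (c : C) (ξ : F.obj c ⟶ d),
    ∃ R ∈ J c, ∀ ⦃c' : C⦄ (f : c' ⟶ c), R.arrows f → T.arrows (F.map f ≫ ξ)

/-- `F` has the covering-lifting property with respect to `(J, K)`. -/
def HasCoverLifting (F : C ⥤ D) (J : GrothendieckTopology C) (K : GrothendieckTopology D) :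
    Prop :=
  ∀ ⦃c : C⦄ (S : Sieve (F.obj c)), S ∈ K (F.obj c) →
    ∃ R ∈ J c, ∀ ⦃d : C⦄ (f : d ⟶ c), R.arrows f → S.arrows (F.map f)

theorem Sieve.functorPullback_pullback (F : C ⥤ D) {c c' : C} (S : Sieve (F.obj c))
    (f : c' ⟶ c) : (S.functorPullback F).pullback f = (S.pullback (F.map f)).functorPullback F :=
  Sieve.ext fun _ g => by simp [Sieve.functorPullback]

section

variable (F : C ⥤ D) (J : GrothendieckTopology C)

theorem coinducedCovers_iff {d : D} (T : Sieve d) :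
    CoinducedCovers F J T ↔ ∀ (c : C) (ξ : F.obj c ⟶ d), (T.pullback ξ).functorPullback F ∈ J c :=
  forall₂_congr fun _ _ =>
    ⟨fun ⟨_, hR, hRT⟩ => J.superset_covering (fun _ f hf => hRT f hf) hR,
      fun h => ⟨_, h, fun _ _ => id⟩⟩

theorem CoinducedCovers.transitive {d : D} {T : Sieve d} (hT : CoinducedCovers F J T)
    {S : Sieve d} (hS : ∀ ⦃e : D⦄ ⦃g : e ⟶ d⦄, T g → CoinducedCovers F J (S.pullback g)) :
    CoinducedCovers F J S := by
  rw [coinducedCovers_iff] at hT ⊢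
  intro c ξ
  refine J.transitive (hT c ξ) _ fun c' f hf => ?_
  have hS' := (coinducedCovers_iff F J _).1 (hS hf) c' (𝟙 _)
  rwa [Sieve.pullback_id, Sieve.pullback_comp, ← Sieve.functorPullback_pullback] at hS'

def coinducedTopology : GrothendieckTopology D where
  sieves _ T := CoinducedCovers F J T
  top_mem' _ := (coinducedCovers_iff F J ⊤).2 fun c _ => by simp
  pullback_stable' _ _ T g hT := (coinducedCovers_iff F J _).2 fun c ξ => by
    simpa [Sieve.pullback_comp] using (coinducedCovers_iff F J T).1 hT c (ξ ≫ g)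
  transitive' _ _ hT _ hS := CoinducedCovers.transitive F J hT hS

theorem isCoverDense_coinducedTopology : F.IsCoverDense (coinducedTopology F J) where
  is_cover d := (coinducedCovers_iff F J _).2 fun c ξ => by
    simp [Sieve.pullback_eq_top_of_mem (Sieve.coverByImage F d) (Presieve.in_coverByImage F ξ)]

theorem hasCoverLifting_coinducedTopology : HasCoverLifting F J (coinducedTopology F J) :=
  fun c S hS => by simpa using hS c (𝟙 _)

end

/-- Proposition 5.26 (first part): for any functor `F : C ⥤ D` and any Grothendieck topology
`J` on `C`, the collection of sieves `J^F` given by the `CoinducedCovers` condition is a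
Grothendieck topology on `D`, and `F : (C, J) ⟶ (D, J^F)` is `J^F`-dense and has the
covering-lifting property. -/
theorem coinduced_is_topology (F : C ⥤ D) (J : GrothendieckTopology C) :
    ∃ K : GrothendieckTopology D,
      (∀ (d : D) (T : Sieve d), T ∈ K d ↔ CoinducedCovers F J T) ∧
      F.IsCoverDense K ∧ HasCoverLifting F J K :=
  ⟨coinducedTopology F J, fun _ _ => Iff.rfl, isCoverDense_coinducedTopology F J,
    hasCoverLifting_coinducedTopology F J⟩

end Stmt11
end

section
/- Let F : (C, J) ⟶ (D, K) be a functor that is K-dense and has the covering-lifting property, and is cover-preserving. Then K is determined by J via: a sieve T on an object d of D is K-covering if and only if for every object c of C and every arrow ξ : F(c) ⟶ d there exists a J-covering sieve R on c such that F(R) ⊆ ξ*(T). -/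
open CategoryTheory

universe v₁ v₂ u₁ u₂

namespace Stmt12

variable {C : Type u₁} {D : Type u₂} [Category.{v₁} C] [Category.{v₂} D]

/-- A sieve `T` on `d : D` satisfies the coinduced-covering condition: for every object `c` of
`C` and every arrow `ξ : F(c) ⟶ d` there is a `J`-covering sieve `R` on `c` with
`F(R) ⊆ ξ*(T)`. -/
def CoinducedCovers (F : C ⥤ D) (J : GrothendieckTopology C) {d : D} (T : Sieve d) : Prop :=
  ∀ (c : C) (ξ : F.obj c ⟶ d),
    ∃ R ∈ J c, ∀ ⦃c' : C⦄ (f : c' ⟶ c), R.arrows f → T.arrows (F.map f ≫ ξ)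

/-- `F` has the covering-lifting property with respect to `(J, K)`. -/
def HasCoverLifting (F : C ⥤ D) (J : GrothendieckTopology C) (K : GrothendieckTopology D) :
    Prop :=
  ∀ ⦃c : C⦄ (S : Sieve (F.obj c)), S ∈ K (F.obj c) →
    ∃ R ∈ J c, ∀ ⦃d : C⦄ (f : d ⟶ c), R.arrows f → S.arrows (F.map f)

/- If `T` is `K`-covering, cover-lifting applied to `ξ*T` gives the `J`-cover `R`. Conversely each
`ξ*T` contains `F(R)` for a `J`-cover `R`, so is `K`-covering by cover-preservation; and since the
arrows factoring through some `F c` form a `K`-cover of `d`, local character of `K` lets these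
pullbacks decide whether `T` covers `d`. -/

theorem coinducedCovers_of_mem {F : C ⥤ D} {J : GrothendieckTopology C}
    {K : GrothendieckTopology D} (hlift : HasCoverLifting F J K) {d : D} {T : Sieve d}
    (hT : T ∈ K d) : CoinducedCovers F J T :=
  fun _ ξ => hlift (T.pullback ξ) (K.pullback_stable ξ hT)

theorem mem_of_functorPushforward_le {F : C ⥤ D} {J : GrothendieckTopology C}
    {K : GrothendieckTopology D} (hcp : CoverPreserving J K F) {c : C} {R : Sieve c}
    (hR : R ∈ J c) {S : Sieve (F.obj c)}
    (hRS : ∀ ⦃c' : C⦄ (f : c' ⟶ c), R.arrows f → S.arrows (F.map f)) : S ∈ K (F.obj c) :=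
  K.superset_covering ((Sieve.functorPushforward_le_iff_le_functorPullback F R S).2 hRS)
    (hcp.cover_preserve hR)

theorem mem_of_pullback_mem_of_isCoverDense {F : C ⥤ D} {K : GrothendieckTopology D}
    (hdense : F.IsCoverDense K) {d : D} {T : Sieve d}
    (hT : ∀ (c : C) (ξ : F.obj c ⟶ d), T.pullback ξ ∈ K (F.obj c)) : T ∈ K d := by
  refine K.transitive (hdense.is_cover d) T fun _ g ⟨⟨c, lift, ξ, fac⟩⟩ => ?_
  rw [← fac, Sieve.pullback_comp]
  exact K.pullback_stable lift (hT c ξ)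

theorem mem_of_coinducedCovers {F : C ⥤ D} {J : GrothendieckTopology C}
    {K : GrothendieckTopology D} (hcp : CoverPreserving J K F) (hdense : F.IsCoverDense K)
    {d : D} {T : Sieve d} (hT : CoinducedCovers F J T) : T ∈ K d :=
  mem_of_pullback_mem_of_isCoverDense hdense fun c ξ =>
    let ⟨_, hR, hRT⟩ := hT c ξ
    mem_of_functorPushforward_le hcp hR hRT

/-- Proposition 5.24: if `F : (C, J) ⟶ (D, K)` is cover-preserving, `K`-dense and has the
covering-lifting property, then `K` is determined by `J`: a sieve `T` on `d` is `K`-covering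
if and only if for every `c` and every `ξ : F(c) ⟶ d` there is a `J`-covering sieve `R` on `c`
with `F(R) ⊆ ξ*(T)` (i.e. `K` is the topology coinduced by `J` along `F`). -/
theorem topology_determined_by_dense_coverLifting (F : C ⥤ D)
    (J : GrothendieckTopology C) (K : GrothendieckTopology D)
    (hcp : CoverPreserving J K F) (hdense : F.IsCoverDense K)
    (hlift : HasCoverLifting F J K) :
    ∀ (d : D) (T : Sieve d), T ∈ K d ↔ CoinducedCovers F J T := by
  intro d T
  exact ⟨coinducedCovers_of_mem hlift, mem_of_coinducedCovers hcp hdense⟩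

end Stmt12
end

section
/- Let F : (C, J) ⟶ (D, K) be a morphism of sites between small-generated sites. Then the induced geometric morphism Sh(F) : Sh(D, K) ⟶ Sh(C, J) is a surjection (its inverse image functor is faithful) if and only if F is cover-reflecting, i.e., any sieve in C whose image under F generates a K-covering sieve is itself J-covering. -/
/-!
The inverse image of `Sh(F)` is faithful iff each unit `X ⟶ F_* F^* X` is injective. Taking
`F^* X` to be the sheafified left Kan extension of `X` along `F.op`, two sections `x y` of `X`
over `c` have the same image iff `F` carries their equalizer sieve to a sieve covering `F c`.
One half is naturality of the unit. For the other, equality in the sheafified colimit means the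
two elements are related by a zigzag locally on `D`; covering-flatness for cospans makes this
local relation transitive, and for parallel pairs lets a common refinement be equalized in `C`.
Cover-reflection then gives injectivity since `X` is separated; conversely, injectivity at the
sheaf `Ω` of closed sieves, applied to `close S` and `⊤`, shows that `S` covers.
-/

open CategoryTheory Limits

universe u

namespace Stmt13

variable {C : Type u} {D : Type u} [SmallCategory C] [SmallCategory D]

/-- Given a finite diagram `X` in `C` and a cone `c` over `X ⋙ F` in `D`, the sieve on the
vertex of `c` consisting of those arrows `g` such that the cone restricted along `g` factors
through the `F`-image of a cone over `X`. -/
def coneFactorSieve (F : C ⥤ D) {I : Type} [SmallCategory I] (X : I ⥤ C)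
    (c : Cone (X ⋙ F)) : Sieve c.pt where
  arrows _ g := ∃ (z : Cone X) (w : _ ⟶ F.obj z.pt),
    ∀ i : I, w ≫ F.map (z.π.app i) = g ≫ c.π.app i
  downward_closed := by
    rintro d' e g ⟨z, w, hw⟩ h
    exact ⟨z, h ≫ w, fun i => by simp only [Category.assoc, hw i]⟩

def CoveringFlat (F : C ⥤ D) (K : GrothendieckTopology D) : Prop :=
  ∀ (I : Type) [SmallCategory I] [FinCategory I] (X : I ⥤ C) (c : Cone (X ⋙ F)),
    coneFactorSieve F X c ∈ K c.pt

open Opposite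

namespace CoveringFlat

variable {F : C ⥤ D} {K : GrothendieckTopology D}

lemma mem_of_cospan (hflat : CoveringFlat F K) {c₁ c₂ c : C} {u₁ : c₁ ⟶ c} {u₂ : c₂ ⟶ c}
    {d : D} {w₁ : d ⟶ F.obj c₁} {w₂ : d ⟶ F.obj c₂} (hw : w₁ ≫ F.map u₁ = w₂ ≫ F.map u₂)
    {R : Sieve d}
    (hR : ∀ ⦃d' : D⦄ (h : d' ⟶ d) (c₀ : C) (v₁ : c₀ ⟶ c₁) (v₂ : c₀ ⟶ c₂) (w : d' ⟶ F.obj c₀),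
      v₁ ≫ u₁ = v₂ ≫ u₂ → w ≫ F.map v₁ = h ≫ w₁ → w ≫ F.map v₂ = h ≫ w₂ → R h) :
    R ∈ K d := by
  refine K.superset_covering ?_ (hflat WalkingCospan (cospan u₁ u₂)
    ((Cone.postcompose (cospanCompIso F u₁ u₂).inv).obj (PullbackCone.mk w₁ w₂ hw)))
  rintro d' h ⟨z, w, hz⟩
  refine hR h z.pt (z.π.app .left) (z.π.app .right) w ?_ ?_ ?_
  · exact (z.w WalkingCospan.Hom.inl).trans (z.w WalkingCospan.Hom.inr).symm
  · exact (hz .left).trans (congrArg (h ≫ ·) (Category.comp_id w₁))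
  · exact (hz .right).trans (congrArg (h ≫ ·) (Category.comp_id w₂))

lemma mem_of_parallelPair (hflat : CoveringFlat F K) {c₁ c : C} {u₁ u₂ : c₁ ⟶ c}
    {d : D} {w : d ⟶ F.obj c₁} (hw : w ≫ F.map u₁ = w ≫ F.map u₂) {R : Sieve d}
    (hR : ∀ ⦃d' : D⦄ (h : d' ⟶ d) (c₀ : C) (v : c₀ ⟶ c₁) (w' : d' ⟶ F.obj c₀),
      v ≫ u₁ = v ≫ u₂ → w' ≫ F.map v = h ≫ w → R h) :
    R ∈ K d := by
  refine K.superset_covering ?_ (hflat WalkingParallelPair (parallelPair u₁ u₂)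
    ((Cone.postcompose (diagramIsoParallelPair _).inv).obj (Fork.ofι w hw)))
  rintro d' h ⟨z, w', hz⟩
  refine hR h z.pt (z.π.app .zero) w' ?_ ?_
  · exact (z.w WalkingParallelPairHom.left).trans (z.w WalkingParallelPairHom.right).symm
  · simpa using hz .zero

end CoveringFlat

section Agreement

variable (F : C ⥤ D) (K : GrothendieckTopology D) (X : Cᵒᵖ ⥤ Type u) (d : D)

def agreementSieve (p q : Σ j : CostructuredArrow F.op (op d), X.obj j.left) : Sieve d where
  arrows d' h := ∃ (c₀ : C) (w : d' ⟶ F.obj c₀) (u₁ : c₀ ⟶ p.1.left.unop)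
    (u₂ : c₀ ⟶ q.1.left.unop), w ≫ F.map u₁ = h ≫ p.1.hom.unop ∧
      w ≫ F.map u₂ = h ≫ q.1.hom.unop ∧ X.map u₁.op p.2 = X.map u₂.op q.2
  downward_closed := by
    rintro d' d'' h ⟨c₀, w, u₁, u₂, h₁, h₂, h₃⟩ e
    exact ⟨c₀, e ≫ w, u₁, u₂, by rw [Category.assoc, h₁, Category.assoc],
      by rw [Category.assoc, h₂, Category.assoc], h₃⟩

/-- A covering-local version of the relation generating the colimit that computes
`(F.op.lan.obj X).obj (op d)`: locally, `p` and `q` come from a common element over some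
`F.obj c₀`. -/
def LocallyRelated (p q : Σ j : CostructuredArrow F.op (op d), X.obj j.left) : Prop :=
  agreementSieve F X d p q ∈ K d

variable {F K X d}

lemma locallyRelated_of_colimitTypeRel
    {p q : Σ j : CostructuredArrow F.op (op d), X.obj j.left}
    (h : (CostructuredArrow.proj F.op (op d) ⋙ X).ColimitTypeRel p q) :
    LocallyRelated F K X d p q := by
  obtain ⟨f, hf⟩ := h
  have hw : q.1.hom.unop ≫ F.map f.left.unop = p.1.hom.unop :=
    congrArg Quiver.Hom.unop (CostructuredArrow.w f)
  refine K.superset_covering (fun d' h _ => ?_) (K.top_mem d)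
  refine ⟨_, h ≫ q.1.hom.unop, f.left.unop, 𝟙 _, by rw [Category.assoc, hw], by simp, ?_⟩
  simp only [Quiver.Hom.op_unop, op_id, Functor.map_id_apply]
  exact hf.symm

lemma locallyRelated_equivalence (hflat : CoveringFlat F K) :
    Equivalence (LocallyRelated F K X d) where
  refl p := locallyRelated_of_colimitTypeRel
    ⟨𝟙 p.1, ((CostructuredArrow.proj F.op (op d) ⋙ X).map_id_apply _ _).symm⟩
  symm {p q} h := by
    refine K.superset_covering ?_ h
    rintro d' g ⟨c₀, w, u₁, u₂, h₁, h₂, h₃⟩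
    exact ⟨c₀, w, u₂, u₁, h₂, h₁, h₃.symm⟩
  trans {p q r} hpq hqr := by
    refine K.transitive (K.intersection_covering hpq hqr) _ ?_
    rintro d' h ⟨⟨c₀, w, u₁, u₂, hw₁, hw₂, hx⟩, ⟨c₀', w', u₂', u₃, hw₂', hw₃, hx'⟩⟩
    refine hflat.mem_of_cospan (hw₂.trans hw₂'.symm) fun d'' h' c₁ v₁ v₂ w'' hv h₁ h₂ => ?_
    refine ⟨c₁, w'', v₁ ≫ u₁, v₂ ≫ u₃, ?_, ?_, ?_⟩
    · rw [F.map_comp, ← Category.assoc, h₁, Category.assoc, hw₁, Category.assoc]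
    · rw [F.map_comp, ← Category.assoc, h₂, Category.assoc, hw₃, Category.assoc]
    · simp only [op_comp, Functor.map_comp_apply, hx, ← hx']
      simp only [← Functor.map_comp_apply, ← op_comp, hv]

end Agreement

section LeftKanExtension

variable {F : C ⥤ D} {K : GrothendieckTopology D} {X : Cᵒᵖ ⥤ Type u} {d : D}

lemma leftKanExtensionObjIsoColimit_hom_map_lanUnit {c : C} (g : d ⟶ F.obj c)
    (x : X.obj (op c)) :
    (F.op.leftKanExtensionObjIsoColimit X (op d)).hom
        ((F.op.lan.obj X).map g.op ((F.op.lanUnit.app X).app (op c) x)) =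
      colimit.ι (CostructuredArrow.proj F.op (op d) ⋙ X) (CostructuredArrow.mk g.op) x :=
  ConcreteCategory.congr_hom (F.op.ι_leftKanExtensionObjIsoColimit_hom X (op d)
    (CostructuredArrow.mk g.op)) x

lemma locallyRelated_of_lan_map_eq (hflat : CoveringFlat F K) {c : C} (g : d ⟶ F.obj c)
    {x y : X.obj (op c)}
    (h : (F.op.lan.obj X).map g.op ((F.op.lanUnit.app X).app (op c) x) =
      (F.op.lan.obj X).map g.op ((F.op.lanUnit.app X).app (op c) y)) :
    LocallyRelated F K X d ⟨CostructuredArrow.mk g.op, x⟩ ⟨CostructuredArrow.mk g.op, y⟩ := by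
  have hι := congrArg (F.op.leftKanExtensionObjIsoColimit X (op d)).hom h
  rw [leftKanExtensionObjIsoColimit_hom_map_lanUnit,
    leftKanExtensionObjIsoColimit_hom_map_lanUnit] at hι
  exact (locallyRelated_equivalence hflat).eqvGen_iff.1
    (Relation.EqvGen.mono (fun _ _ => locallyRelated_of_colimitTypeRel) _ _
      (Types.colimit_eq hι))

lemma pullback_functorPushforward_equalizerSieve_mem (hflat : CoveringFlat F K) {c : C}
    (g : d ⟶ F.obj c) {x y : X.obj (op c)}
    (h : LocallyRelated F K X d ⟨CostructuredArrow.mk g.op, x⟩ ⟨CostructuredArrow.mk g.op, y⟩) :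
    ((Presheaf.equalizerSieve (F := X) x y).functorPushforward F).pullback g ∈ K d := by
  refine K.transitive h _ ?_
  rintro d' h' ⟨c₀, w, u₁, u₂, hw₁, hw₂, hx⟩
  refine hflat.mem_of_parallelPair (hw₁.trans hw₂.symm) fun d'' h'' c₁ v w' hv hw' => ?_
  refine ⟨c₁, v ≫ u₁, w', ?_, ?_⟩
  · change X.map (v ≫ u₁).op x = X.map (v ≫ u₁).op y
    conv_rhs => rw [hv]
    simp only [op_comp, Functor.map_comp_apply, hx]
  · rw [F.map_comp, reassoc_of% hw', hw₁, Category.assoc]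
    rfl

end LeftKanExtension

section SheavesOfTypes

variable {J : GrothendieckTopology C}

lemma eq_of_equalizerSieve_mem (X : Sheaf J (Type u)) {c : C}
    {x y : X.obj.obj (op c)} (h : Presheaf.equalizerSieve (F := X.obj) x y ∈ J c) : x = y :=
  ((isSheaf_iff_isSheaf_of_type J _).1 X.property _ h).isSeparatedFor.ext fun _ _ hf => hf

lemma unit_app_eq_of_unit_app_eq {E : Type*} [Category E] {L₁ L₂ : Sheaf J (Type u) ⥤ E}
    {R : E ⥤ Sheaf J (Type u)} (adj₁ : L₁ ⊣ R) (adj₂ : L₂ ⊣ R) {X : Sheaf J (Type u)} {c : Cᵒᵖ}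
    {x y : X.obj.obj c} (h : (adj₁.unit.app X).hom.app c x = (adj₁.unit.app X).hom.app c y) :
    (adj₂.unit.app X).hom.app c x = (adj₂.unit.app X).hom.app c y := by
  rw [← Adjunction.unit_leftAdjointUniq_hom_app adj₁ adj₂]
  simp only [ObjectProperty.FullSubcategory.comp_hom, NatTrans.comp_app, types_comp_apply, h]

lemma faithful_iff_injective_unit_app {E : Type*} [Category E] {L : Sheaf J (Type u) ⥤ E}
    {R : E ⥤ Sheaf J (Type u)} (adj : L ⊣ R) :
    L.Faithful ↔ ∀ X c, Function.Injective ((adj.unit.app X).hom.app c) := by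
  have hmono (X : Sheaf J (Type u)) :
      Mono (adj.unit.app X) ↔ ∀ c, Function.Injective ((adj.unit.app X).hom.app c) := by
    rw [Sheaf.Hom.mono_iff_presheaf_mono, NatTrans.mono_iff_mono_app]
    simp only [mono_iff_injective]
  simp only [← hmono]
  exact ⟨fun _ => adj.unit_mono_of_L_faithful, fun _ => adj.faithful_L_of_mono_unit_app⟩

end SheavesOfTypes

section Unit

variable {F : C ⥤ D} {J : GrothendieckTopology C} {K : GrothendieckTopology D}
  [Functor.IsContinuous.{u} F J K]

lemma unit_app_eq_of_functorPushforward_mem {pb : Sheaf J (Type u) ⥤ Sheaf K (Type u)}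
    (adj : pb ⊣ F.sheafPushforwardContinuous (Type u) J K) (X : Sheaf J (Type u)) {c : C}
    {x y : X.obj.obj (op c)}
    (h : (Presheaf.equalizerSieve (F := X.obj) x y).functorPushforward F ∈ K (F.obj c)) :
    (adj.unit.app X).hom.app (op c) x = (adj.unit.app X).hom.app (op c) y := by
  refine eq_of_equalizerSieve_mem (pb.obj X) (K.superset_covering ?_ h)
  rintro d _ ⟨c', u, w, hu, rfl⟩
  have key (z : X.obj.obj (op c)) :
      (pb.obj X).obj.map (w ≫ F.map u).op ((adj.unit.app X).hom.app (op c) z) =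
        (pb.obj X).obj.map w.op ((adj.unit.app X).hom.app (op c') (X.obj.map u.op z)) :=
    ((pb.obj X).obj.map_comp_apply _ _ _).trans
      (congrArg _ (NatTrans.naturality_apply (adj.unit.app X).hom u.op z).symm)
  exact (key x).trans ((congrArg _ (congrArg _ hu)).trans (key y).symm)

lemma functorPushforward_mem_of_unit_app_eq (hflat : CoveringFlat F K) (X : Sheaf J (Type u))
    {c : C} {x y : X.obj.obj (op c)}
    (h : ((Functor.sheafPullbackConstruction.sheafAdjunctionContinuous F (Type u) J K).unit.app
        X).hom.app (op c) x =
      ((Functor.sheafPullbackConstruction.sheafAdjunctionContinuous F (Type u) J K).unit.app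
        X).hom.app (op c) y) :
    (Presheaf.equalizerSieve (F := X.obj) x y).functorPushforward F ∈ K (F.obj c) :=
  -- this unit is `toSheafify K _ ∘ F.op.lanUnit` on the nose, so `h` is an equality in the
  -- sheafification of the left Kan extension
  K.transitive (Presheaf.equalizerSieve_mem K (toSheafify K (F.op.lan.obj X.obj)) _ _ h) _
    fun _ g hg => pullback_functorPushforward_equalizerSieve_mem hflat g
      (locallyRelated_of_lan_map_eq hflat g hg)

lemma mem_of_injective_unit_app_Ω {pb : Sheaf J (Type u) ⥤ Sheaf K (Type u)}
    (adj : pb ⊣ F.sheafPushforwardContinuous (Type u) J K) {c : C}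
    (hinj : Function.Injective ((adj.unit.app (Sheaf.Ω J)).hom.app (op c))) {S : Sieve c}
    (hS : S.functorPushforward F ∈ K (F.obj c)) : S ∈ J c := by
  let x : (Sheaf.Ω J).obj.obj (op c) := ⟨J.close S, J.close_isClosed S⟩
  let y : (Sheaf.Ω J).obj.obj (op c) := ⟨(⊤ : Sieve c), fun _ _ _ => trivial⟩
  have hle : S ≤ Presheaf.equalizerSieve (F := (Sheaf.Ω J).obj) x y := fun _ u hu =>
    Subtype.ext (by
      change (J.close S).pullback u = (⊤ : Sieve c).pullback u
      rw [← J.pullback_close, Sieve.pullback_eq_top_of_mem S hu, Sieve.pullback_top,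
        J.close_eq_top_iff_mem]
      exact J.top_mem _)
  have hxy : x = y := hinj (unit_app_eq_of_functorPushforward_mem adj _
    (K.superset_covering (Sieve.functorPushforward_monotone F _ hle) hS))
  exact (J.close_eq_top_iff_mem S).1 (congrArg Subtype.val hxy)

end Unit

theorem surjection_iff_coverReflecting_general (J : GrothendieckTopology C)
    (K : GrothendieckTopology D) (F : C ⥤ D)
    (hflat : CoveringFlat F K)
    [Functor.IsContinuous.{u} F J K] :
    ∀ (pb : Sheaf J (Type u) ⥤ Sheaf K (Type u))
      (_ : pb ⊣ F.sheafPushforwardContinuous (Type u) J K),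
      (pb.Faithful ↔
        ∀ (c : C) (S : Sieve c), Sieve.functorPushforward F S ∈ K (F.obj c) → S ∈ J c) := by
  intro pb adj
  rw [faithful_iff_injective_unit_app adj]
  refine ⟨fun hinj c S hS => mem_of_injective_unit_app_Ω adj (hinj _ _) hS,
    fun hrefl X c x y hxy => eq_of_equalizerSieve_mem X (hrefl _ _ ?_)⟩
  exact functorPushforward_mem_of_unit_app_eq hflat X (unit_app_eq_of_unit_app_eq adj
    (Functor.sheafPullbackConstruction.sheafAdjunctionContinuous F (Type u) J K) hxy)

/-- Theorem 6.3(a): for a morphism of (small) sites `F : (C, J) ⟶ (D, K)` (a covering-flat,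
cover-preserving functor), the induced geometric morphism `Sh(F) : Sh(D, K) ⟶ Sh(C, J)` —
whose direct image is composition with `F` and whose inverse image is any left adjoint of it —
is a surjection (i.e. its inverse image is faithful) if and only if `F` is cover-reflecting:
any sieve of `C` whose image under `F` generates a `K`-covering sieve is itself covering. -/
theorem surjection_iff_coverReflecting (J : GrothendieckTopology C)
    (K : GrothendieckTopology D) (F : C ⥤ D)
    (hflat : CoveringFlat F K) (hcp : CoverPreserving J K F)
    [Functor.IsContinuous.{u} F J K] :
    ∀ (pb : Sheaf J (Type u) ⥤ Sheaf K (Type u))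
      (_ : pb ⊣ F.sheafPushforwardContinuous (Type u) J K),
      (pb.Faithful ↔
        ∀ (c : C) (S : Sieve c), Sieve.functorPushforward F S ∈ K (F.obj c) → S ∈ J c) :=
  surjection_iff_coverReflecting_general J K F hflat

end Stmt13
end

section
/- Let f : F ⟶ E be a geometric morphism between Grothendieck toposes whose inverse image f* is faithful and whose essential image (the class of objects isomorphic to f*(A) for some A) is closed under subobjects in F. Then f* is full. -/
open CategoryTheory Limits

universe u

/-!
The graph of `g : L A ⟶ L B` is a subobject of `L (A ⨯ B) ≅ L A ⨯ L B`, hence of the form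
`L m'` for a subobject `m' : A' ⟶ A ⨯ B`. The first projection `A' ⟶ A` is inverted by `L`,
so it is an isomorphism (a faithful functor out of a balanced category reflects isomorphisms),
and `g` is the image under `L` of its inverse followed by the second projection.
-/

namespace CategoryTheory.Functor

variable {C D : Type*} [Category C] [Category D]

def EssImageClosedUnderSubobjects (L : C ⥤ D) : Prop :=
  ∀ (A : C) (B : D) (m : B ⟶ L.obj A), Mono m →
    ∃ (A' : C) (m' : A' ⟶ A) (_ : Mono m') (e : B ≅ L.obj A'), e.hom ≫ L.map m' = m

theorem exists_map_eq_of_section {L : C ⥤ D} [L.ReflectsIsomorphisms]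
    (hL : L.EssImageClosedUnderSubobjects) {A B P : C} (p : P ⟶ A) (q : P ⟶ B)
    (s : L.obj A ⟶ L.obj P) (hs : s ≫ L.map p = 𝟙 _) :
    ∃ f : A ⟶ B, L.map f = s ≫ L.map q := by
  have : Mono s := mono_of_mono_fac hs
  obtain ⟨A', m', -, e, he⟩ := hL P (L.obj A) s inferInstance
  have hLm' : L.map m' = e.inv ≫ s := by rw [← he, Iso.inv_hom_id_assoc]
  have hLk : L.map (m' ≫ p) = e.inv := by
    rw [L.map_comp, hLm', Category.assoc, hs, Category.comp_id]
  have : IsIso (L.map (m' ≫ p)) := by rw [hLk]; infer_instance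
  have : IsIso (m' ≫ p) := isIso_of_reflects_iso _ L
  refine ⟨CategoryTheory.inv (m' ≫ p) ≫ m' ≫ q, ?_⟩
  rw [L.map_comp, L.map_inv, IsIso.inv_comp_eq, hLk, L.map_comp, hLm', Category.assoc]

end CategoryTheory.Functor

namespace Stmt14

theorem inverseImage_full_of_faithful_of_closed_under_subobjects_general
    {C D : Type u} [SmallCategory C] [SmallCategory D]
    (J : GrothendieckTopology C) (K : GrothendieckTopology D)
    (L : Sheaf J (Type u) ⥤ Sheaf K (Type u))
    [PreservesFiniteLimits L] [L.Faithful]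
    (hsub : ∀ (A : Sheaf J (Type u)) (B : Sheaf K (Type u)) (m : B ⟶ L.obj A), Mono m →
      ∃ (A' : Sheaf J (Type u)) (m' : A' ⟶ A) (_ : Mono m') (e : B ≅ L.obj A'),
        e.hom ≫ L.map m' = m) :
    L.Full := by
  refine ⟨fun {A B} g => ?_⟩
  let s := prod.lift (𝟙 (L.obj A)) g ≫ inv (prodComparison L A B)
  obtain ⟨f, hf⟩ := L.exists_map_eq_of_section hsub prod.fst prod.snd s
    (by rw [Category.assoc, inv_prodComparison_map_fst, prod.lift_fst])
  rw [Category.assoc, inv_prodComparison_map_snd, prod.lift_snd] at hf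
  exact ⟨f, hf⟩

/-- Part of Proposition 6.12 (cf. p. 229 of [Johnstone, Sketches of an Elephant]): if
`f : F ⟶ E` is a geometric morphism between Grothendieck toposes (presented as sheaf toposes,
with inverse image `L ⊣ R` preserving finite limits) such that `L = f*` is faithful and its
essential image is closed under subobjects (every mono `B ⟶ L(A)` is, compatibly, the image
under `L` of a mono into `A`), then `L = f*` is full. -/
theorem inverseImage_full_of_faithful_of_closed_under_subobjects
    {C D : Type u} [SmallCategory C] [SmallCategory D]
    (J : GrothendieckTopology C) (K : GrothendieckTopology D)
    (L : Sheaf J (Type u) ⥤ Sheaf K (Type u)) (R : Sheaf K (Type u) ⥤ Sheaf J (Type u))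
    (adj : L ⊣ R) [PreservesFiniteLimits L] [L.Faithful]
    (hsub : ∀ (A : Sheaf J (Type u)) (B : Sheaf K (Type u)) (m : B ⟶ L.obj A), Mono m →
      ∃ (A' : Sheaf J (Type u)) (m' : A' ⟶ A) (_ : Mono m') (e : B ≅ L.obj A'),
        e.hom ≫ L.map m' = m) :
    L.Full :=
  inverseImage_full_of_faithful_of_closed_under_subobjects_general J K L hsub

end Stmt14
end

section
/- Let C be a separating family of objects in a Grothendieck topos E and f : F ⟶ E a geometric morphism. If for every c ∈ C every subobject of f*(c) lies in the essential image of f*, then every subobject of every object of the form f*(A), for A in E, lies in the essential image of f*. -/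
/-!
Cover `A` by an epimorphism `p : ∐ Xᵢ ⟶ A` with `Xᵢ ∈ 𝒢`. Since `L` preserves coproducts and
epimorphisms, the maps `L Xᵢ ⟶ L A` cover `L A` locally, hence their pullbacks `Bᵢ` along the
subsheaf `B ↪ L A` cover `B` locally, and by hypothesis `Bᵢ ≅ L A'ᵢ` for subobjects `A'ᵢ ↪ Xᵢ`.
Let `I ↪ A` be the image of `∐ A'ᵢ ⟶ A`. As `L` also preserves monomorphisms, `L I ↪ L A` is a
subsheaf covered locally by the `L A'ᵢ`, i.e. by the same sections as `B`, so `L I` and `B` are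
the same subobject of `L A`.
-/

open CategoryTheory Limits Opposite

universe u

namespace Stmt15

instance instSheafTypeHasColimitsOfShapeDiscrete {C : Type u} [SmallCategory C]
    (J : GrothendieckTopology C) (ι : Type u) :
    HasColimitsOfShape (Discrete ι) (Sheaf J (Type u)) :=
  Sheaf.instHasColimitsOfShape (K := Discrete ι) (D := Type u)

end Stmt15

namespace CategoryTheory

namespace Presheaf

variable {C : Type*} [Category* C] (J : GrothendieckTopology C)

def IsJointlyLocallySurjective {ι : Type*} {Y : ι → Cᵒᵖ ⥤ Type w} {Z : Cᵒᵖ ⥤ Type w}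
    (f : ∀ i, Y i ⟶ Z) : Prop :=
  ∀ ⦃U : C⦄ (s : Z.obj (op U)), (⨆ i, imageSieve (f i) s) ∈ J U

variable {J} {ι : Type*} {Y : ι → Cᵒᵖ ⥤ Type w} {Z : Cᵒᵖ ⥤ Type w} {f : ∀ i, Y i ⟶ Z}

lemma isJointlyLocallySurjective_of_jointly_surjective
    (hf : ∀ (U : Cᵒᵖ) (s : Z.obj U), ∃ i y, (f i).app U y = s) :
    IsJointlyLocallySurjective J f := by
  intro U s
  obtain ⟨i, y, hy⟩ := hf (op U) s
  have hid : (⨆ i, imageSieve (f i) s) (𝟙 U) :=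
    le_iSup (fun i => imageSieve (f i) s) i _ ⟨y, by simpa using hy⟩
  rw [Sieve.id_mem_iff_eq_top.1 hid]
  exact J.top_mem U

namespace IsJointlyLocallySurjective

lemma comp (hf : IsJointlyLocallySurjective J f) {W : Cᵒᵖ ⥤ Type w} (g : Z ⟶ W)
    [IsLocallySurjective J g] : IsJointlyLocallySurjective J (fun i => f i ≫ g) := by
  intro U s
  refine J.transitive (imageSieve_mem J g s) _ ?_
  rintro V h ⟨t, ht⟩
  refine J.superset_covering (iSup_le fun i => ?_) (hf t)
  rintro W k ⟨y, hy⟩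
  refine le_iSup (fun i => imageSieve (f i ≫ g) s) i _ ⟨y, ?_⟩
  simp [hy, ht]

lemma isLocallySurjective_of_fac (hf : IsJointlyLocallySurjective J f) {B : Cᵒᵖ ⥤ Type w}
    (g : ∀ i, Y i ⟶ B) (l : B ⟶ Z) (fac : ∀ i, g i ≫ l = f i) : IsLocallySurjective J l :=
  ⟨fun s => J.superset_covering (iSup_le fun i => by
    rintro V k ⟨y, hy⟩
    exact ⟨(g i).app _ y, by rw [← hy, ← fac i]; rfl⟩) (hf s)⟩

lemma of_isPullback (hf : IsJointlyLocallySurjective J f) {B : Cᵒᵖ ⥤ Type w} (m : B ⟶ Z)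
    {P : ι → Cᵒᵖ ⥤ Type w} {fst : ∀ i, P i ⟶ B} {snd : ∀ i, P i ⟶ Y i}
    (h : ∀ i, IsPullback (fst i) (snd i) m (f i)) : IsJointlyLocallySurjective J fst := by
  intro U s
  refine J.superset_covering (iSup_le fun i => ?_) (hf (m.app _ s))
  rintro V k ⟨y, hy⟩
  obtain ⟨x, hx, -⟩ := ((Types.isPullback_iff _ _ _ _).1
    ((h i).map ((evaluation _ _).obj (op V)))).2.2 (B.map k.op s) y (by simp [hy])
  exact le_iSup (fun i => imageSieve (fst i) s) i _ ⟨x, hx⟩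

end IsJointlyLocallySurjective

end Presheaf

namespace Sheaf

open Presheaf

variable {C : Type*} [Category* C] {J : GrothendieckTopology C}

lemma isJointlyLocallySurjective_cofan_inj [HasWeakSheafify J (Type w)]
    [J.WEqualsLocallyBijective (Type w)] {ι : Type w} {Y : ι → Sheaf J (Type w)}
    {c : Cofan Y} (hc : IsColimit c) : IsJointlyLocallySurjective J (fun i => (c.inj i).hom) := by
  let E := colimit.cocone (Discrete.functor Y ⋙ sheafToPresheaf J (Type w))
  have hE : IsJointlyLocallySurjective J (fun i => E.ι.app ⟨i⟩) :=
    isJointlyLocallySurjective_of_jointly_surjective fun U s => by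
      obtain ⟨⟨i⟩, y, hy⟩ := Types.jointly_surjective_of_isColimit
        (isColimitOfPreserves ((evaluation _ _).obj U) (colimit.isColimit _)) s
      exact ⟨i, y, hy⟩
  -- `c` is isomorphic to the sheafification of the presheaf coproduct
  have hS : IsJointlyLocallySurjective J (Y := fun i => (Y i).obj)
      (Z := (sheafifyCocone E).pt.obj) (fun i => ((sheafifyCocone E).ι.app ⟨i⟩).hom) := by
    have h := hE.comp (toSheafify J E.pt)
    simp only [← sheafifyCocone_ι_app_val] at h
    exact h
  have h := hS.comp
    ((isColimitSheafifyCocone E (colimit.isColimit _)).coconePointUniqueUpToIso hc).hom.hom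
  simp only [← ObjectProperty.FullSubcategory.comp_hom,
    IsColimit.comp_coconePointUniqueUpToIso_hom] at h
  exact h

lemma isJointlyLocallySurjective_pullback_fst {ι : Type*} {Y : ι → Sheaf J (Type w)}
    {Z B : Sheaf J (Type w)} {f : ∀ i, Y i ⟶ Z}
    (hf : IsJointlyLocallySurjective J (fun i => (f i).hom)) (m : B ⟶ Z) :
    IsJointlyLocallySurjective J (fun i => (pullback.fst m (f i)).hom) :=
  hf.of_isPullback m.hom fun i => (IsPullback.of_hasPullback m (f i)).map (sheafToPresheaf J _)

variable [HasSheafify J (Type w)]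

lemma isJointlyLocallySurjective_map_sigma_ι_comp [J.WEqualsLocallyBijective (Type w)]
    {E : Type*} [Category* E] {ι : Type w} (X : ι → E) [HasCoproduct X] {A : E}
    (p : ∐ X ⟶ A) [Epi p] (L : E ⥤ Sheaf J (Type w))
    [PreservesColimit (Discrete.functor X) L] [L.PreservesEpimorphisms] :
    IsJointlyLocallySurjective J (fun i => (L.map (Sigma.ι X i ≫ p)).hom) := by
  have : IsLocallySurjective (L.map p) := (isLocallySurjective_iff_epi _).2 inferInstance
  have h := (isJointlyLocallySurjective_cofan_inj
    (isColimitOfHasCoproductOfPreservesColimit L X)).comp (L.map p).hom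
  simp only [cofan_mk_inj, ← ObjectProperty.FullSubcategory.comp_hom, ← L.map_comp] at h
  exact h

variable {ι : Type*}

lemma exists_fac_of_isJointlyLocallySurjective {B B' Z : Sheaf J (Type w)} (m : B ⟶ Z)
    (m' : B' ⟶ Z) [Mono m'] {P : ι → Sheaf J (Type w)} (u : ∀ i, P i ⟶ B)
    (hu : IsJointlyLocallySurjective J (fun i => (u i).hom))
    (hfac : ∀ i, ∃ v, v ≫ m' = u i ≫ m) : ∃ t : B ⟶ B', t ≫ m' = m := by
  choose v hv using hfac
  have : IsLocallySurjective (pullback.snd m' m) :=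
    hu.isLocallySurjective_of_fac (fun i => (pullback.lift (v i) (u i) (hv i)).hom) _
      fun i => by rw [← ObjectProperty.FullSubcategory.comp_hom, pullback.lift_snd]
  have : IsIso (pullback.snd m' m) := isIso_of_mono_of_epi _
  exact ⟨inv (pullback.snd m' m) ≫ pullback.fst m' m, by simp [pullback.condition]⟩

lemma exists_iso_of_isJointlyLocallySurjective {B B' Z : Sheaf J (Type w)} (m : B ⟶ Z)
    (m' : B' ⟶ Z) [Mono m] [Mono m'] {ι' : Type*} {P : ι → Sheaf J (Type w)}
    {P' : ι' → Sheaf J (Type w)} (u : ∀ i, P i ⟶ B) (u' : ∀ i, P' i ⟶ B')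
    (hu : IsJointlyLocallySurjective J (fun i => (u i).hom))
    (hu' : IsJointlyLocallySurjective J (fun i => (u' i).hom))
    (hfac : ∀ i, ∃ v, v ≫ m' = u i ≫ m) (hfac' : ∀ i, ∃ v, v ≫ m = u' i ≫ m') :
    ∃ e : B ≅ B', e.hom ≫ m' = m := by
  obtain ⟨t, ht⟩ := exists_fac_of_isJointlyLocallySurjective m m' u hu hfac
  obtain ⟨t', ht'⟩ := exists_fac_of_isJointlyLocallySurjective m' m u' hu' hfac'
  exact ⟨⟨t, t', by simp [← cancel_mono m, ht, ht'], by simp [← cancel_mono m', ht, ht']⟩, ht⟩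

end Sheaf

end CategoryTheory

namespace Stmt15

/-- Proposition 6.10: let `C` (here: `𝒢`) be a separating set of objects for a Grothendieck
topos `E` (presented as a sheaf topos) and `f : F ⟶ E` a geometric morphism (with inverse
image `L ⊣ R` preserving finite limits).  If for every `c ∈ 𝒢` every subobject of `f*(c)` lies
in the essential image of `f*` (compatibly, i.e. it is the image under `f*` of a subobject of
`c`), then the same holds for every subobject of every object of the form `f*(A)`, `A ∈ E`. -/
theorem subobjects_in_image_of_generators
    {C D : Type u} [SmallCategory C] [SmallCategory D]
    (J : GrothendieckTopology C) (K : GrothendieckTopology D)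
    (L : Sheaf J (Type u) ⥤ Sheaf K (Type u)) (R : Sheaf K (Type u) ⥤ Sheaf J (Type u))
    (adj : L ⊣ R) [PreservesFiniteLimits L]
    (𝒢 : Set (Sheaf J (Type u)))
    (hsep : ∀ e : Sheaf J (Type u), ∃ (ι : Type u) (X : ι → Sheaf J (Type u)),
      (∀ i, X i ∈ 𝒢) ∧ ∃ p : (∐ X) ⟶ e, Epi p)
    (hgen : ∀ c ∈ 𝒢, ∀ (B : Sheaf K (Type u)) (m : B ⟶ L.obj c), Mono m →
      ∃ (A' : Sheaf J (Type u)) (m' : A' ⟶ c) (_ : Mono m') (e : B ≅ L.obj A'),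
        e.hom ≫ L.map m' = m) :
    ∀ (A : Sheaf J (Type u)) (B : Sheaf K (Type u)) (m : B ⟶ L.obj A), Mono m →
      ∃ (A' : Sheaf J (Type u)) (m' : A' ⟶ A) (_ : Mono m') (e : B ≅ L.obj A'),
        e.hom ≫ L.map m' = m := by
  intro A B m hm
  obtain ⟨ι, X, hX, p, hp⟩ := hsep A
  have := adj.isLeftAdjoint
  let f i := L.map (Sigma.ι X i ≫ p)
  choose A' m' hm' e he using
    fun i => hgen (X i) (hX i) (pullback m (f i)) (pullback.snd m (f i)) inferInstance
  let g : ∐ A' ⟶ A := Sigma.desc fun i => m' i ≫ Sigma.ι X i ≫ p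
  have hsq i : pullback.fst m (f i) ≫ m =
      ((e i).hom ≫ L.map (Sigma.ι A' i ≫ factorThruImage g)) ≫ L.map (image.ι g) := by
    rw [pullback.condition, ← he i]
    simp only [f, g, Category.assoc, ← L.map_comp, image.fac, Sigma.ι_desc]
  obtain ⟨eB, heB⟩ := Sheaf.exists_iso_of_isJointlyLocallySurjective m (L.map (image.ι g))
    (fun i => pullback.fst m (f i)) (fun i => L.map (Sigma.ι A' i ≫ factorThruImage g))
    (Sheaf.isJointlyLocallySurjective_pullback_fst
      (Sheaf.isJointlyLocallySurjective_map_sigma_ι_comp X p L) m)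
    (Sheaf.isJointlyLocallySurjective_map_sigma_ι_comp A' _ L)
    (fun i => ⟨_, (hsq i).symm⟩) (fun i => ⟨(e i).inv ≫ pullback.fst m (f i), by simp [hsq]⟩)
  exact ⟨image g, image.ι g, inferInstance, eB, heB⟩

end Stmt15
end

section
/- Let f : F ⟶ E be a geometric morphism between Grothendieck toposes. Then f is an inclusion (embedding) if and only if f* is locally surjective (every object of F admits an epimorphism from an object in the image of f*) and locally full (for every arrow g : f*(x) ⟶ f*(y) in F there exist an arrow s : x' ⟶ x in E with f*(s) an epimorphism and an arrow g' : x' ⟶ y in E such that g ∘ f*(s) = f*(g')). -/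
/-!
If the counit `f* f_* ⟶ 1` is an isomorphism, it is itself the epimorphism from the image of `f*`,
and `f*` inverts the unit, so pulling back `η_y` along `η_x ≫ f_* g` gives an arrow `s` with
`f*(s)` invertible through which `g` lifts. Conversely, local surjectivity makes each counit
component epi (it factors every epimorphism `f*(a) ⟶ b`), and local fullness makes it mono: two
arrows `f*(a) ⟶ f* f_* b` agreeing after the counit become, after an epi `f*(s)`, images of two
arrows `x' ⟶ f_* b` with the same transpose, hence equal.
-/

open CategoryTheory Limits

universe u

namespace Stmt18

variable {C D : Type*} [Category C] [Category D]

def LocallySurjective (L : C ⥤ D) : Prop :=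
  ∀ B : D, ∃ (A : C) (p : L.obj A ⟶ B), Epi p

def LocallyFull (L : C ⥤ D) : Prop :=
  ∀ (X Y : C) (g : L.obj X ⟶ L.obj Y),
    ∃ (X' : C) (s : X' ⟶ X) (g' : X' ⟶ Y), Epi (L.map s) ∧ L.map s ≫ g = L.map g'

theorem LocallyFull.exists_pair {L : C ⥤ D} (hfull : LocallyFull L) {X Y : C}
    (u v : L.obj X ⟶ L.obj Y) :
    ∃ (X' : C) (s : X' ⟶ X) (u' v' : X' ⟶ Y),
      Epi (L.map s) ∧ L.map s ≫ u = L.map u' ∧ L.map s ≫ v = L.map v' := by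
  obtain ⟨X₁, s₁, u₁, _, hu₁⟩ := hfull X Y u
  obtain ⟨X₂, s₂, v₂, _, hv₂⟩ := hfull X₁ Y (L.map s₁ ≫ v)
  refine ⟨X₂, s₂ ≫ s₁, s₂ ≫ u₁, v₂, ?_, ?_, ?_⟩
  · rw [L.map_comp]; infer_instance
  · rw [L.map_comp, L.map_comp, Category.assoc, hu₁]
  · rw [L.map_comp, Category.assoc, hv₂]

namespace Adjunction

variable {L : C ⥤ D} {R : D ⥤ C} (adj : L ⊣ R)

theorem isIso_map_unit_app [IsIso adj.counit] (X : C) : IsIso (L.map (adj.unit.app X)) :=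
  IsIso.of_isIso_fac_right (hh := IsIso.id _) (adj.left_triangle_components X)

theorem exists_isIso_map_comp_eq_map [HasPullbacks C] [PreservesLimitsOfShape WalkingCospan L]
    [IsIso adj.counit] {X Y : C} (g : L.obj X ⟶ L.obj Y) :
    ∃ (X' : C) (s : X' ⟶ X) (g' : X' ⟶ Y), IsIso (L.map s) ∧ L.map s ≫ g = L.map g' := by
  let f := adj.unit.app X ≫ R.map g
  refine ⟨pullback f (adj.unit.app Y), pullback.fst _ _, pullback.snd _ _, ?_, ?_⟩
  · have := isIso_map_unit_app adj Y
    exact ((IsPullback.of_hasPullback f (adj.unit.app Y)).map L).isIso_fst_of_isIso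
  · have hsq := congrArg (fun t => L.map t ≫ adj.counit.app (L.obj Y))
      (pullback.condition (f := f) (g := adj.unit.app Y))
    simpa [f] using hsq

theorem eq_of_map_comp_counit_eq {X : C} {B : D} {g₁ g₂ : X ⟶ R.obj B}
    (h : L.map g₁ ≫ adj.counit.app B = L.map g₂ ≫ adj.counit.app B) : g₁ = g₂ :=
  (adj.homEquiv X B).symm.injective (by simpa only [Adjunction.homEquiv_counit] using h)

theorem epi_counit_app_of_epi {A : C} {B : D} (p : L.obj A ⟶ B) [Epi p] :
    Epi (adj.counit.app B) :=
  epi_of_epi_fac ((adj.homEquiv_counit _ _ _).symm.trans ((adj.homEquiv A B).symm_apply_apply p))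

theorem mono_counit_app (hsurj : LocallySurjective L) (hfull : LocallyFull L) (B : D) :
    Mono (adj.counit.app B) := by
  refine ⟨fun {Z} u v huv => ?_⟩
  obtain ⟨A, q, _⟩ := hsurj Z
  obtain ⟨X, s, u', v', _, hu, hv⟩ := hfull.exists_pair (q ≫ u) (q ≫ v)
  have : u' = v' := eq_of_map_comp_counit_eq adj (by
    rw [← hu, ← hv]; simp only [Category.assoc, huv])
  rw [← cancel_epi q, ← cancel_epi (L.map s), hu, hv, this]

theorem isIso_counit [Balanced D] (hsurj : LocallySurjective L) (hfull : LocallyFull L) :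
    IsIso adj.counit := by
  have (B : D) : IsIso (adj.counit.app B) := by
    obtain ⟨A, p, _⟩ := hsurj B
    have := epi_counit_app_of_epi adj p
    have := mono_counit_app adj hsurj hfull B
    exact isIso_of_mono_of_epi _
  exact NatIso.isIso_of_isIso_app _

end Adjunction

/-- Corollary 6.6: a geometric morphism `f : F ⟶ E` between Grothendieck toposes (presented
as sheaf toposes; `L = f*` is the inverse image, left adjoint to the direct image `R = f_*`,
and preserves finite limits) is an inclusion — i.e. its direct image is full and faithful —
if and only if `f*` is locally surjective (every object of `F` admits an epimorphism from an
object in the image of `f*`) and locally full (every arrow `g : f*(x) ⟶ f*(y)` satisfies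
`g ∘ f*(s) = f*(g')` for some `s : x' ⟶ x` with `f*(s)` epi and some `g' : x' ⟶ y`). -/
theorem inclusion_iff_locally_surjective_and_locally_full
    {C D : Type u} [SmallCategory C] [SmallCategory D]
    (J : GrothendieckTopology C) (K : GrothendieckTopology D)
    (L : Sheaf J (Type u) ⥤ Sheaf K (Type u)) (R : Sheaf K (Type u) ⥤ Sheaf J (Type u))
    (adj : L ⊣ R) [PreservesFiniteLimits L] :
    (R.Full ∧ R.Faithful) ↔
      ((∀ b : Sheaf K (Type u), ∃ (a : Sheaf J (Type u)) (p : L.obj a ⟶ b), Epi p) ∧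
       (∀ (x y : Sheaf J (Type u)) (g : L.obj x ⟶ L.obj y),
         ∃ (x' : Sheaf J (Type u)) (s : x' ⟶ x) (g' : x' ⟶ y),
           Epi (L.map s) ∧ L.map s ≫ g = L.map g')) := by
  constructor
  · rintro ⟨_, _⟩
    refine ⟨fun b => ⟨R.obj b, adj.counit.app b, inferInstance⟩, fun x y g => ?_⟩
    obtain ⟨x', s, g', _, h⟩ := Adjunction.exists_isIso_map_comp_eq_map adj g
    exact ⟨x', s, g', inferInstance, h⟩
  · rintro ⟨hsurj, hfull⟩
    have := Adjunction.isIso_counit adj hsurj hfull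
    exact ⟨adj.fullyFaithfulROfIsIsoCounit.full, adj.fullyFaithfulROfIsIsoCounit.faithful⟩

end Stmt18
end

section
/- Let C be the full subcategory of a Grothendieck topos E on a separating family of objects, and let S be a sieve in C (on an object c ∈ C) such that the colimit in E of the diagram associated to the sieve generated by S in E lies in C. Then S is covering for the topology induced on C by the canonical topology of E if and only if S is effective-epimorphic in C, if and only if S is universally effective-epimorphic in C. -/
/-!
In a sheaf topos every jointly epimorphic sieve covers for the canonical topology: its image
presheaf is locally dense, a property stable under pullback, and a compatible family on the sieve
descends to a map out of the image, which extends uniquely along the locally bijective inclusion.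
As the objects of `C` separate, `C` is cover-dense, so if `ι(S)` is epimorphic in `E` then `S`
covers for the induced topology; that topology is subcanonical, so every pullback of `S` is
effective-epimorphic.

Conversely, if `S` is effective-epimorphic, the legs of the colimit cocone of the pushed-forward
diagram, whose vertex `L` lies in `C`, amalgamate along `S` to a section of the canonical map
`L ⟶ c`. Two maps out of `c` that agree on `S` agree after `L ⟶ c`, hence are equal.
-/

open CategoryTheory Limits

universe u

namespace Stmt19

attribute [local instance 2000] Sheaf.instHasColimitsOfShape

open Opposite

section

variable {E : Type*} [Category* E]

def _root_.CategoryTheory.Sieve.IsJointlyEpi {X : E} (T : Sieve X) : Prop :=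
  ∀ ⦃Z : E⦄ (u v : X ⟶ Z), (∀ ⦃Y : E⦄ (f : Y ⟶ X), T f → f ≫ u = f ≫ v) → u = v

lemma _root_.CategoryTheory.Sieve.isJointlyEpi_functorPushforward_iff {C : Type*} [Category* C]
    (F : C ⥤ E) {c : C} (S : Sieve c) :
    (S.functorPushforward F).IsJointlyEpi ↔ ∀ {Z : E} (u v : F.obj c ⟶ Z),
      (∀ ⦃d : C⦄ (f : d ⟶ c), S f → F.map f ≫ u = F.map f ≫ v) → u = v := by
  refine ⟨fun hT Z u v h ↦ hT u v ?_, fun h Z u v huv ↦ h u v fun d f hf ↦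
    huv _ (S.image_mem_functorPushforward F hf)⟩
  rintro Y _ ⟨d, f, g, hf, rfl⟩
  simp only [Category.assoc, h f hf]

lemma _root_.CategoryTheory.Sieve.IsJointlyEpi.of_epi_desc {X : E} {T : Sieve X}
    {cc : Cocone T.arrows.diagram} (hcc : IsColimit cc) [hφ : Epi (hcc.desc T.arrows.cocone)] :
    T.IsJointlyEpi := by
  intro Z u v huv
  let φ : cc.pt ⟶ X := hcc.desc T.arrows.cocone
  have : Epi φ := hφ
  refine (cancel_epi φ).mp (hcc.hom_ext fun j ↦ ?_)
  have hj : cc.ι.app j ≫ φ = j.obj.hom := hcc.fac _ j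
  rw [← Category.assoc, ← Category.assoc, hj]
  exact huv _ j.property

lemma _root_.CategoryTheory.Sieve.isJointlyEpi_coverByImage {P : ObjectProperty E}
    (hP : P.IsSeparating) (X : E) : (Sieve.coverByImage P.ι X).IsJointlyEpi :=
  fun _ u v huv ↦ hP u v fun G hG h ↦ huv h (Presieve.in_coverByImage P.ι (Y := ⟨G, hG⟩) h)

lemma isSplitEpi_desc_of_effectiveEpimorphic {P : ObjectProperty E} {c : P.FullSubcategory}
    {S : Sieve c} (hS : S.EffectiveEpimorphic)
    {cc : Cocone (S.functorPushforward P.ι).arrows.diagram} (hcc : IsColimit cc) (hP : P cc.pt) :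
    IsSplitEpi (hcc.desc (S.functorPushforward P.ι).arrows.cocone) := by
  have hS' (W : P.FullSubcategory) :
      S.arrows.IsSheafFor (P.ι.op ⋙ yoneda.obj (P.ι.obj W)) :=
    (Presieve.isSheafFor_iff_of_nat_equiv (fun _ ↦ P.fullyFaithfulι.homEquiv)
      (fun _ _ f x ↦ P.ι.map_comp f x)).mp
      ((Sieve.EffectiveEpimorphic.iff_forall_isSheafFor_yoneda S).mp hS W)
  have hle : S.arrows ≤ (S.functorPushforward P.ι).arrows.functorPullback P.ι := fun _ _ hg ↦
    S.image_mem_functorPushforward P.ι hg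
  obtain ⟨ρ, hρ, -⟩ := hS' ⟨cc.pt, hP⟩ _
    (((Sieve.yonedaFamily_fromCocone_compatible _ cc).functorPullback P.ι).restrict hle)
  let φ : cc.pt ⟶ P.ι.obj c := hcc.desc (S.functorPushforward P.ι).arrows.cocone
  refine ⟨⟨ρ, (hS' c).isSeparatedFor.ext fun d g hg ↦ ?_⟩⟩
  have h1 : P.ι.map g ≫ ρ =
      cc.ι.app ⟨Over.mk (P.ι.map g), S.image_mem_functorPushforward P.ι hg⟩ := hρ g hg
  have h2 : cc.ι.app ⟨Over.mk (P.ι.map g), S.image_mem_functorPushforward P.ι hg⟩ ≫ φ =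
      P.ι.map g := hcc.fac _ _
  change P.ι.map g ≫ ρ ≫ φ = P.ι.map g ≫ 𝟙 _
  rw [reassoc_of% h1, Category.comp_id]
  exact h2

lemma _root_.CategoryTheory.Sieve.effectiveEpimorphic_of_mem_inducedTopology {C : Type*}
    [Category* C] (F : C ⥤ E) [F.Full] [F.Faithful] (K : GrothendieckTopology E) [K.Subcanonical]
    {X : C} {S : Sieve X} (hS : S ∈ F.inducedTopology K X) : S.EffectiveEpimorphic := by
  have := GrothendieckTopology.subcanonical_of_full_of_faithful F (F.inducedTopology K) K
  exact (Sieve.EffectiveEpimorphic.iff_forall_isSheafFor_yoneda S).mpr fun W ↦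
    GrothendieckTopology.Subcanonical.isSheaf_of_isRepresentable (yoneda.obj W) S hS

end

section SheafTopos

variable {D : Type u} [SmallCategory D] {J₀ : GrothendieckTopology D}

noncomputable def sheafYonedaEquiv {U : D} {X : Sheaf J₀ (Type u)} :
    ((presheafToSheaf J₀ (Type u)).obj (yoneda.obj U) ⟶ X) ≃ X.obj.obj (op U) :=
  ((sheafificationAdjunction J₀ (Type u)).homEquiv _ _).trans yonedaEquiv

lemma sheafYonedaEquiv_comp {U : D} {X Y : Sheaf J₀ (Type u)}
    (σ : (presheafToSheaf J₀ (Type u)).obj (yoneda.obj U) ⟶ X) (g : X ⟶ Y) :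
    sheafYonedaEquiv (σ ≫ g) = g.hom.app (op U) (sheafYonedaEquiv σ) := by
  simp only [sheafYonedaEquiv, Equiv.trans_apply, Adjunction.homEquiv_naturality_right,
    yonedaEquiv_comp]
  rfl

lemma sheafYonedaEquiv_symm_app {U : D} {X Y : Sheaf J₀ (Type u)} (g : X ⟶ Y)
    (s : X.obj.obj (op U)) :
    sheafYonedaEquiv.symm (g.hom.app (op U) s) = sheafYonedaEquiv.symm s ≫ g := by
  rw [Equiv.symm_apply_eq, sheafYonedaEquiv_comp, Equiv.apply_symm_apply]

lemma sheafYonedaEquiv_symm_app_sheafYonedaEquiv_id {U : D} {X : Sheaf J₀ (Type u)}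
    (s : X.obj.obj (op U)) :
    (sheafYonedaEquiv.symm s).hom.app (op U) (sheafYonedaEquiv (𝟙 _)) = s := by
  rw [← sheafYonedaEquiv_comp, Category.id_comp, Equiv.apply_symm_apply]

def _root_.CategoryTheory.Sieve.imageSubfunctor {X : Sheaf J₀ (Type u)} (T : Sieve X) :
    Subfunctor X.obj where
  obj U := {s | ∃ (Y : Sheaf J₀ (Type u)) (h : Y ⟶ X) (_ : T h) (a : Y.obj.obj U),
    h.hom.app U a = s}
  map := by
    rintro U V i s ⟨Y, h, hh, a, rfl⟩
    exact ⟨Y, h, hh, Y.obj.map i a, NatTrans.naturality_apply h.hom i a⟩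

lemma range_le_imageSubfunctor {X Y : Sheaf J₀ (Type u)} {T : Sieve X} {h : Y ⟶ X} (hh : T h) :
    Subfunctor.range h.hom ≤ T.imageSubfunctor :=
  fun _ _ ⟨a, ha⟩ ↦ ⟨Y, h, hh, a, ha⟩

lemma isLocallySurjective_imageSubfunctor_ι {X : Sheaf J₀ (Type u)} {T : Sieve X}
    (hT : T.IsJointlyEpi) : Presheaf.IsLocallySurjective J₀ T.imageSubfunctor.ι := by
  let G := T.imageSubfunctor
  let ψ : (presheafToSheaf J₀ (Type u)).obj G.toFunctor ⟶ X :=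
    ((sheafificationAdjunction J₀ (Type u)).homEquiv _ _).symm G.ι
  have hψ : toSheafify J₀ G.toFunctor ≫ ψ.hom = G.ι := toSheafify_sheafifyLift J₀ G.ι X.property
  have : Epi ψ := ⟨fun u v huv ↦ hT u v fun Y h hh ↦ by
    have hfac : h = ObjectProperty.homMk
        (Subfunctor.lift h.hom (range_le_imageSubfunctor hh) ≫ toSheafify J₀ _) ≫ ψ := by
      ext1
      change h.hom = Subfunctor.lift h.hom _ ≫ toSheafify J₀ _ ≫ ψ.hom
      rw [hψ, Subfunctor.lift_ι]
    rw [hfac, Category.assoc, Category.assoc, huv]⟩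
  have : Sheaf.IsLocallySurjective ψ := (Sheaf.isLocallySurjective_iff_epi ψ).mpr this
  rw [← hψ]
  infer_instance

lemma isLocallySurjective_imageSubfunctor_ι_pullback {X Y : Sheaf J₀ (Type u)} {T : Sieve X}
    (hT : Presheaf.IsLocallySurjective J₀ T.imageSubfunctor.ι) (g : Y ⟶ X) :
    Presheaf.IsLocallySurjective J₀ (T.pullback g).imageSubfunctor.ι := by
  refine ⟨fun {U} y ↦ J₀.superset_covering ?_
    (Presheaf.imageSieve_mem J₀ T.imageSubfunctor.ι (g.hom.app (op U) y))⟩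
  rintro V w ⟨⟨_, Z, h, hh, a, rfl⟩, hw⟩
  -- `Y.map w y` is the image of the universal section under the map it classifies.
  refine ⟨⟨Y.obj.map w.op y, _, sheafYonedaEquiv.symm (Y.obj.map w.op y), ?_, _,
    sheafYonedaEquiv_symm_app_sheafYonedaEquiv_id _⟩, rfl⟩
  have hw' : g.hom.app (op V) (Y.obj.map w.op y) = h.hom.app (op V) a := by
    rw [NatTrans.naturality_apply]
    exact hw.symm
  change T (sheafYonedaEquiv.symm _ ≫ g)
  rw [← sheafYonedaEquiv_symm_app, hw', sheafYonedaEquiv_symm_app]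
  exact T.downward_closed hh _

section Amalgamation

variable {X W : Sheaf J₀ (Type u)} {T : Sieve X}
  {x : Presieve.FamilyOfElements (yoneda.obj W) T.arrows}

-- Compare `a` and `a'` through the maps out of the sheafified representable that they classify.
lemma app_eq_app_of_compatible (hx : x.Compatible) {U : D} {Y Y' : Sheaf J₀ (Type u)}
    {h : Y ⟶ X} {h' : Y' ⟶ X} (hh : T h) (hh' : T h')
    {a : Y.obj.obj (op U)} {a' : Y'.obj.obj (op U)}
    (e : h.hom.app (op U) a = h'.hom.app (op U) a') :
    (x h hh).hom.app (op U) a = (x h' hh').hom.app (op U) a' := by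
  have hcomp : sheafYonedaEquiv.symm a ≫ x h hh = sheafYonedaEquiv.symm a' ≫ x h' hh' :=
    hx _ _ hh hh' (by rw [← sheafYonedaEquiv_symm_app, e, sheafYonedaEquiv_symm_app])
  rw [← sheafYonedaEquiv_symm_app_sheafYonedaEquiv_id ((x h hh).hom.app (op U) a),
    ← sheafYonedaEquiv_symm_app_sheafYonedaEquiv_id ((x h' hh').hom.app (op U) a'),
    sheafYonedaEquiv_symm_app, sheafYonedaEquiv_symm_app, hcomp]

lemma exists_app_eq_of_compatible (hx : x.Compatible) {U : Dᵒᵖ} (s : T.imageSubfunctor.obj U) :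
    ∃ z : W.obj.obj U, ∀ (Y : Sheaf J₀ (Type u)) (h : Y ⟶ X) (hh : T h) (a : Y.obj.obj U),
      h.hom.app U a = s.1 → (x h hh).hom.app U a = z := by
  obtain ⟨_, Y, h, hh, a, rfl⟩ := s
  exact ⟨_, fun Y' h' hh' a' e ↦ app_eq_app_of_compatible hx hh' hh e⟩

noncomputable def imageSubfunctorDesc (hx : x.Compatible) :
    T.imageSubfunctor.toFunctor ⟶ W.obj where
  app U := TypeCat.ofHom fun s ↦ (exists_app_eq_of_compatible hx s).choose
  naturality U V i := by
    ext ⟨_, Y, h, hh, a, rfl⟩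
    change (exists_app_eq_of_compatible hx _).choose =
      W.obj.map i (exists_app_eq_of_compatible hx _).choose
    rw [← (exists_app_eq_of_compatible hx _).choose_spec Y h hh a rfl]
    exact ((exists_app_eq_of_compatible hx _).choose_spec Y h hh _
      (NatTrans.naturality_apply h.hom i a)).symm.trans
      (NatTrans.naturality_apply (x h hh).hom i a)

lemma imageSubfunctorDesc_app (hx : x.Compatible) {U : Dᵒᵖ} {Y : Sheaf J₀ (Type u)} {h : Y ⟶ X}
    (hh : T h) (a : Y.obj.obj U) :
    (imageSubfunctorDesc hx).app U ⟨h.hom.app U a, Y, h, hh, a, rfl⟩ = (x h hh).hom.app U a :=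
  ((exists_app_eq_of_compatible hx _).choose_spec Y h hh a rfl).symm

lemma isAmalgamation_iff_ι_comp (hx : x.Compatible) (t : X ⟶ W) :
    x.IsAmalgamation t ↔ T.imageSubfunctor.ι ≫ t.hom = imageSubfunctorDesc hx := by
  constructor
  · intro ht
    ext U ⟨_, Y, h, hh, a, rfl⟩
    change t.hom.app U (h.hom.app U a) = (imageSubfunctorDesc hx).app U ⟨_, Y, h, hh, a, rfl⟩
    have hamalg : h ≫ t = x h hh := ht h hh
    rw [imageSubfunctorDesc_app hx hh a, ← hamalg]
    rfl
  · intro ht Y h hh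
    change h ≫ t = x h hh
    ext U a
    have := imageSubfunctorDesc_app hx hh a
    rw [← ht] at this
    exact this

end Amalgamation

-- The inclusion of the image is locally bijective, so maps from it to a sheaf extend uniquely.
lemma isSheafFor_yoneda_of_isLocallySurjective {X : Sheaf J₀ (Type u)} {T : Sieve X}
    (hT : Presheaf.IsLocallySurjective J₀ T.imageSubfunctor.ι) (W : Sheaf J₀ (Type u)) :
    Presieve.IsSheafFor (yoneda.obj W) T.arrows := by
  intro x hx
  have hW : Function.Bijective (fun t : X.obj ⟶ W.obj ↦ T.imageSubfunctor.ι ≫ t) :=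
    (J₀.W_of_isLocallyBijective T.imageSubfunctor.ι) W.obj W.property
  obtain ⟨t, ht, huniq⟩ := hW.existsUnique (imageSubfunctorDesc hx)
  refine ⟨ObjectProperty.homMk t, (isAmalgamation_iff_ι_comp hx _).mpr ht, fun t' ht' ↦ ?_⟩
  exact Sheaf.hom_ext (huniq _ ((isAmalgamation_iff_ι_comp hx t').mp ht'))

lemma mem_canonicalTopology_of_isJointlyEpi {X : Sheaf J₀ (Type u)} {T : Sieve X}
    (hT : T.IsJointlyEpi) : T ∈ Sheaf.canonicalTopology (Sheaf J₀ (Type u)) X := by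
  refine Sheaf.mem_finestTopology_of_forall_isSheafFor ?_
  rintro _ ⟨W, rfl⟩ Y g
  exact isSheafFor_yoneda_of_isLocallySurjective
    (isLocallySurjective_imageSubfunctor_ι_pullback (isLocallySurjective_imageSubfunctor_ι hT) g) W

end SheafTopos

/-- Lemma 4.20: let `C` be the full subcategory of a Grothendieck topos `E` (presented as a
sheaf topos) on a separating family of objects (those satisfying `P`), and `S` a sieve in `C`
on an object `c` such that the colimit in `E` of the diagram associated to the sieve generated
by `S` in `E` lies in `C`.  Then the following are equivalent: (i) `S` is covering for the
topology induced on `C` by the canonical topology of `E` (i.e. the family `ι(S)` is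
epimorphic in `E`); (ii) `S` is effective-epimorphic in `C`; (iii) `S` is universally
effective-epimorphic in `C`. -/
theorem induced_canonical_cover_iff_effectiveEpimorphic
    {D : Type u} [SmallCategory D] (J₀ : GrothendieckTopology D)
    (P : Sheaf J₀ (Type u) → Prop)
    (hsep : ∀ e : Sheaf J₀ (Type u), ∃ (ι : Type u) (X : ι → Sheaf J₀ (Type u)),
      (∀ i, P (X i)) ∧ ∃ p : (∐ X) ⟶ e, Epi p)
    (c : ObjectProperty.FullSubcategory P) (S : Sieve c)
    (hcolim : ∃ cc : Cocone
        ((Sieve.functorPushforward (ObjectProperty.ι P) S).arrows.diagram),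
      Nonempty (IsColimit cc) ∧ P cc.pt) :
    ((∀ {Z : Sheaf J₀ (Type u)}
        (u v : (ObjectProperty.ι P).obj c ⟶ Z),
        (∀ ⦃d : ObjectProperty.FullSubcategory P⦄ (f : d ⟶ c), S.arrows f →
          (ObjectProperty.ι P).map f ≫ u = (ObjectProperty.ι P).map f ≫ v) →
        u = v)
      ↔ S.EffectiveEpimorphic) ∧
    (S.EffectiveEpimorphic ↔
      ∀ ⦃c' : ObjectProperty.FullSubcategory P⦄ (f : c' ⟶ c), (S.pullback f).EffectiveEpimorphic) := by
  have hP : ObjectProperty.IsSeparating P := .mk_of_exists_epi fun e ↦ by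
    obtain ⟨ι, X, hX, p, hp⟩ := hsep e
    exact ⟨ι, X, hX, _, colimit.isColimit _, p, hp⟩
  have : (ObjectProperty.ι P).IsCoverDense (Sheaf.canonicalTopology _) :=
    ⟨fun e ↦ mem_canonicalTopology_of_isJointlyEpi (Sieve.isJointlyEpi_coverByImage hP e)⟩
  have universal (hS : (S.functorPushforward (ObjectProperty.ι P)).IsJointlyEpi) ⦃c'⦄
      (f : c' ⟶ c) : (S.pullback f).EffectiveEpimorphic :=
    (S.pullback f).effectiveEpimorphic_of_mem_inducedTopology _ (Sheaf.canonicalTopology _)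
      (GrothendieckTopology.pullback_stable _ f
        ((Functor.mem_inducedTopology_iff_of_isCoverDense _ _ S).mpr
          (mem_canonicalTopology_of_isJointlyEpi hS)))
  have jointlyEpi (hS : S.EffectiveEpimorphic) :
      (S.functorPushforward (ObjectProperty.ι P)).IsJointlyEpi := by
    obtain ⟨cc, ⟨hcc⟩, hpt⟩ := hcolim
    have := isSplitEpi_desc_of_effectiveEpimorphic hS hcc hpt
    exact .of_epi_desc hcc
  rw [← Sieve.isJointlyEpi_functorPushforward_iff]
  exact ⟨⟨fun hS ↦ by simpa using universal hS (𝟙 c), jointlyEpi⟩,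
    ⟨fun hS ↦ universal (jointlyEpi hS), fun h ↦ by simpa using h (𝟙 c)⟩⟩

end Stmt19
end
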